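/- arXiv:2006.06543 — 5 statements merged into one kernel-verified Lean document; each statement's English description precedes it below -/
import Mathlib

section
/- Let f : ℝ → ℝ be strictly positive everywhere, suppose log f is strictly concave on ℝ, and suppose ∫_ℝ f(x) dx < ∞. Then f is bounded above on ℝ. -/
/-!
A log-concave positive function `f` is continuous and quasiconcave, so for `f a > 0` the
superlevel set `{x | f a ≤ f x}` is a closed interval. Integrability gives it finite measure,
so it is bounded, hence compact, and `f` is bounded on it; outside it `f < f a`.
-/

open MeasureTheory Set

theorem Set.OrdConnected.bddAbove_of_volume_ne_top {s : Set ℝ} (hs : s.OrdConnected)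
    (hvol : volume s ≠ ⊤) : BddAbove s := by
  by_contra hunbdd
  obtain ⟨x, hx⟩ : s.Nonempty := nonempty_of_not_bddAbove hunbdd
  have hray : Ici x ⊆ s := fun t ht ↦
    let ⟨y, hy, hty⟩ := not_bddAbove_iff.1 hunbdd t
    hs.out hx hy ⟨ht, hty.le⟩
  exact hvol (top_unique (by simpa using measure_mono (μ := volume) hray))

theorem Set.OrdConnected.isBounded_of_volume_ne_top {s : Set ℝ} (hs : s.OrdConnected)
    (hvol : volume s ≠ ⊤) : Bornology.IsBounded s := by
  refine isBounded_iff_bddBelow_bddAbove.2 ⟨?_, hs.bddAbove_of_volume_ne_top hvol⟩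
  have hneg : (-s).OrdConnected := hs.preimage_anti fun _ _ ↦ neg_le_neg
  rw [← bddAbove_neg]
  exact hneg.bddAbove_of_volume_ne_top (by rwa [Measure.measure_neg])

theorem QuasiconcaveOn.bddAbove_range_of_integrable {f : ℝ → ℝ}
    (hf : QuasiconcaveOn ℝ univ f) (hcont : Continuous f) (hint : Integrable f) :
    BddAbove (range f) := by
  by_cases hpos : ∃ a, 0 < f a
  · obtain ⟨a, ha⟩ := hpos
    set S := {x | f a ≤ f x}
    have hconv : Convex ℝ S := by simpa [S] using hf (f a)
    have hbdd : Bornology.IsBounded S :=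
      hconv.ordConnected.isBounded_of_volume_ne_top (hint.measure_ge_lt_top ha).ne
    have hcompact : IsCompact S :=
      Metric.isCompact_of_isClosed_isBounded (isClosed_le continuous_const hcont) hbdd
    obtain ⟨M, hM⟩ := hcompact.bddAbove_image hcont.continuousOn
    refine ⟨max M (f a), forall_mem_range.2 fun x ↦ ?_⟩
    by_cases hx : x ∈ S
    · exact (hM (mem_image_of_mem f hx)).trans (le_max_left _ _)
    · exact (not_le.1 hx).le.trans (le_max_right _ _)
  · push Not at hpos
    exact ⟨0, forall_mem_range.2 hpos⟩

/-- Every strictly positive function on ℝ whose logarithm is strictly concave and whose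
integral is finite is bounded above. -/
theorem strictly_logconcave_integrable_bounded (f : ℝ → ℝ)
    (hpos : ∀ x, 0 < f x)
    (hconc : StrictConcaveOn ℝ Set.univ (fun x => Real.log (f x)))
    (hint : Integrable f) :
    ∃ M : ℝ, ∀ x, f x ≤ M := by
  have hlog := hconc.concaveOn
  have hexp_log : Real.exp ∘ (fun x => Real.log (f x)) = f :=
    funext fun x ↦ Real.exp_log (hpos x)
  have hquasi : QuasiconcaveOn ℝ univ f :=
    hexp_log ▸ hlog.quasiconcaveOn.monotone_comp Real.exp_monotone
  have hcont : Continuous f :=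
    hexp_log ▸ Real.continuous_exp.comp (continuousOn_univ.1 (hlog.continuousOn isOpen_univ))
  obtain ⟨M, hM⟩ := hquasi.bddAbove_range_of_integrable hcont hint
  exact ⟨M, fun x ↦ hM (mem_range_self x)⟩
end

section
/- Fix σ > 0 and Δ̄ > 0, and let f(ξ) = (2πσ²)^{−1/2} exp(−ξ²/(2σ²)) be the N(0, σ²) density. Define J*(ξ) = Δ̄^{−2} · (exp(Δ̄²/(2σ²)) + exp(Δ̄·|ξ|/σ²) − 2)². Then for every ξ ∈ ℝ and every Δ with 0 < |Δ| ≤ Δ̄ one has ((f(ξ − Δ) − f(ξ)) / (Δ · f(ξ)))² ≤ J*(ξ), and moreover ∫_ℝ J*(ξ) f(ξ) dξ < ∞. -/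
open MeasureTheory Real

/-- convexity of exp: `exp (t*s) ≤ t * exp s + (1 - t)` for `t ∈ [0,1]`. -/
lemma exp_mul_le_aux {t s : ℝ} (ht0 : 0 ≤ t) (ht1 : t ≤ 1) :
    Real.exp (t * s) - 1 ≤ t * (Real.exp s - 1) := by
  have h := convexOn_exp.2 (Set.mem_univ s) (Set.mem_univ (0 : ℝ)) ht0
    (by linarith : (0:ℝ) ≤ 1 - t) (by ring)
  simp only [smul_eq_mul, mul_zero, add_zero, Real.exp_zero, mul_one] at h
  linarith

/-- `1 - exp (-t) ≤ exp t - 1`. -/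
lemma one_sub_exp_neg_le (t : ℝ) : 1 - Real.exp (-t) ≤ Real.exp t - 1 := by
  have h1 := Real.add_one_le_exp t
  have h2 := Real.add_one_le_exp (-t)
  nlinarith [Real.exp_pos t, Real.exp_pos (-t), sq_nonneg (Real.exp t - 1),
    Real.exp_neg t]

/-- key elementary inequality. -/
lemma abs_exp_sub_one_le {u v : ℝ} (hv : 0 ≤ v) :
    |Real.exp (u - v) - 1| ≤ (Real.exp |u| - 1) + (Real.exp v - 1) := by
  have hu : u ≤ |u| := le_abs_self u
  have hu' : -|u| ≤ u := neg_abs_le u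
  rcases le_or_gt 1 (Real.exp (u - v)) with h | h
  · rw [abs_of_nonneg (by linarith)]
    have : Real.exp (u - v) ≤ Real.exp |u| := Real.exp_le_exp.2 (by linarith)
    have : (1:ℝ) ≤ Real.exp v := Real.one_le_exp hv
    linarith
  · rw [abs_of_nonpos (by linarith)]
    have h1 : Real.exp (-(|u| + v)) ≤ Real.exp (u - v) := Real.exp_le_exp.2 (by linarith)
    have h2 : Real.exp (-(|u| + v)) = Real.exp (-|u|) * Real.exp (-v) := by
      rw [← Real.exp_add]; ring_nf
    have h3 : (1 - Real.exp (-|u|)) * (1 - Real.exp (-v)) ≥ 0 := by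
      have := Real.exp_le_one_iff.2 (neg_nonpos.2 (abs_nonneg u))
      have := Real.exp_le_one_iff.2 (neg_nonpos.2 hv)
      nlinarith
    have h4 := one_sub_exp_neg_le |u|
    have h5 := one_sub_exp_neg_le v
    nlinarith

/-- The Gaussian density satisfies the paper's finite-Fisher-information domination
assumption: the squared finite-difference approximations to the score are dominated by the
explicit function `J*`, which is integrable against the density. -/
theorem gaussian_finite_fisher_domination (σ Δbar : ℝ) (hσ : 0 < σ) (hΔ : 0 < Δbar)
    (f : ℝ → ℝ)
    (hf : ∀ ξ, f ξ = (Real.sqrt (2 * Real.pi * σ ^ 2))⁻¹ * Real.exp (-ξ ^ 2 / (2 * σ ^ 2)))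
    (Jstar : ℝ → ℝ)
    (hJ : ∀ ξ, Jstar ξ =
      (1 / Δbar ^ 2) *
        (Real.exp (Δbar ^ 2 / (2 * σ ^ 2)) + Real.exp (Δbar * |ξ| / σ ^ 2) - 2) ^ 2) :
    (∀ ξ Δ : ℝ, Δ ≠ 0 → |Δ| ≤ Δbar →
        ((f (ξ - Δ) - f ξ) / (Δ * f ξ)) ^ 2 ≤ Jstar ξ) ∧
      Integrable (fun ξ => Jstar ξ * f ξ) := by
  have hσ2 : (0:ℝ) < 2 * σ ^ 2 := by positivity
  constructor
  · intro ξ Δ hΔ0 hΔb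
    have hσne : σ ≠ 0 := hσ.ne'
    have hfb : 0 < f ξ := by rw [hf ξ]; positivity
    -- ratio computation
    set u : ℝ := ξ * Δ / σ ^ 2 with hu
    set v : ℝ := Δ ^ 2 / (2 * σ ^ 2) with hv
    have hratio : f (ξ - Δ) = f ξ * Real.exp (u - v) := by
      have hexp : Real.exp (-(ξ - Δ) ^ 2 / (2 * σ ^ 2))
          = Real.exp (-ξ ^ 2 / (2 * σ ^ 2)) * Real.exp (u - v) := by
        rw [← Real.exp_add]
        congr 1
        show -(ξ - Δ) ^ 2 / (2 * σ ^ 2)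
            = -ξ ^ 2 / (2 * σ ^ 2) + (ξ * Δ / σ ^ 2 - Δ ^ 2 / (2 * σ ^ 2))
        field_simp
        ring
      rw [hf, hf, hexp]
      ring
    have hsimp : (f (ξ - Δ) - f ξ) / (Δ * f ξ) = (Real.exp (u - v) - 1) / Δ := by
      rw [hratio]
      field_simp
    rw [hsimp, hJ ξ]
    set U : ℝ := Δbar * |ξ| / σ ^ 2 with hU
    set V : ℝ := Δbar ^ 2 / (2 * σ ^ 2) with hV
    set t : ℝ := |Δ| / Δbar with ht
    have hΔpos : 0 < |Δ| := abs_pos.2 hΔ0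
    have ht0 : 0 < t := by positivity
    have ht1 : t ≤ 1 := by rw [ht, div_le_one hΔ]; exact hΔb
    have hv0 : 0 ≤ v := by positivity
    have key : |Real.exp (u - v) - 1| ≤ t * ((Real.exp V - 1) + (Real.exp U - 1)) := by
      have h1 := abs_exp_sub_one_le (u := u) hv0
      have huU : |u| = t * U := by
        rw [hu, hU, ht, abs_div, abs_mul, abs_of_pos (by positivity : (0:ℝ) < σ ^ 2)]
        field_simp
      have hvV : v ≤ t * V := by
        have htV : t * V = |Δ| * Δbar / (2 * σ ^ 2) := by
          rw [ht, hV]; field_simp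
        have hnum : Δ ^ 2 ≤ |Δ| * Δbar := by
          nlinarith [sq_abs Δ, mul_le_mul_of_nonneg_left hΔb (abs_nonneg Δ)]
        rw [hv, htV]
        gcongr
      have h2 : Real.exp |u| - 1 ≤ t * (Real.exp U - 1) := by
        rw [huU]; exact exp_mul_le_aux ht0.le ht1
      have h3 : Real.exp v - 1 ≤ t * (Real.exp V - 1) := by
        calc Real.exp v - 1 ≤ Real.exp (t * V) - 1 := by
              have := Real.exp_le_exp.2 hvV; linarith
          _ ≤ t * (Real.exp V - 1) := exp_mul_le_aux ht0.le ht1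
      linarith
    have hbound : |(Real.exp (u - v) - 1) / Δ| ≤
        (Real.exp V + Real.exp U - 2) / Δbar := by
      rw [abs_div]
      rw [div_le_div_iff₀ hΔpos hΔ]
      calc |Real.exp (u - v) - 1| * Δbar ≤ t * ((Real.exp V - 1) + (Real.exp U - 1)) * Δbar :=
            mul_le_mul_of_nonneg_right key hΔ.le
        _ = (Real.exp V + Real.exp U - 2) * |Δ| := by
            rw [ht]; field_simp; ring
    have hRHSnn : (0:ℝ) ≤ (Real.exp V + Real.exp U - 2) / Δbar := by
      have h1 : (1:ℝ) ≤ Real.exp V := Real.one_le_exp (by positivity)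
      have h2 : (1:ℝ) ≤ Real.exp U := Real.one_le_exp (by positivity)
      apply div_nonneg _ hΔ.le
      linarith
    have := sq_le_sq' (neg_le_of_abs_le hbound) (le_of_abs_le hbound)
    calc ((Real.exp (u - v) - 1) / Δ) ^ 2
        ≤ ((Real.exp V + Real.exp U - 2) / Δbar) ^ 2 := this
      _ = 1 / Δbar ^ 2 * (Real.exp V + Real.exp U - 2) ^ 2 := by
          rw [div_pow]; ring
  · -- integrability
    set C : ℝ := (Real.sqrt (2 * Real.pi * σ ^ 2))⁻¹ with hC
    set E : ℝ := Real.exp (Δbar ^ 2 / (2 * σ ^ 2)) with hE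
    set c : ℝ := Δbar / σ ^ 2 with hc
    have hc0 : 0 < c := by positivity
    have hE1 : (1:ℝ) ≤ E := Real.one_le_exp (by positivity)
    -- majorant: K * (exp (2cξ - ξ²/(2σ²)) + exp (-2cξ - ξ²/(2σ²)))
    have hint : ∀ b : ℝ, Integrable (fun ξ : ℝ => Real.exp (b * ξ - ξ ^ 2 / (2 * σ ^ 2))) := by
      intro b
      have h1 : Integrable (fun ξ : ℝ => Real.exp (-(1 / (2 * σ ^ 2)) * ξ ^ 2)) :=
        integrable_exp_neg_mul_sq (by positivity)
      have h2 := (h1.comp_sub_right (b * σ ^ 2)).const_mul (Real.exp (b ^ 2 * σ ^ 2 / 2))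
      have heq : (fun ξ : ℝ => Real.exp (b * ξ - ξ ^ 2 / (2 * σ ^ 2)))
          = fun ξ : ℝ => Real.exp (b ^ 2 * σ ^ 2 / 2) *
              Real.exp (-(1 / (2 * σ ^ 2)) * (ξ - b * σ ^ 2) ^ 2) := by
        funext ξ
        rw [← Real.exp_add]
        congr 1
        have hσne : σ ≠ 0 := hσ.ne'
        field_simp
        ring
      rw [heq]
      exact h2
    set K : ℝ := E ^ 2 * C / Δbar ^ 2 with hK
    have hg : Integrable (fun ξ : ℝ => K * (Real.exp (2 * c * ξ - ξ ^ 2 / (2 * σ ^ 2))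
        + Real.exp (-(2 * c) * ξ - ξ ^ 2 / (2 * σ ^ 2)))) :=
      ((hint (2 * c)).add (hint (-(2 * c)))).const_mul K
    have hmeas : AEStronglyMeasurable (fun ξ => Jstar ξ * f ξ) volume := by
      have heq : (fun ξ => Jstar ξ * f ξ) = fun ξ =>
          (1 / Δbar ^ 2) *
            (Real.exp (Δbar ^ 2 / (2 * σ ^ 2)) + Real.exp (Δbar * |ξ| / σ ^ 2) - 2) ^ 2 *
          ((Real.sqrt (2 * Real.pi * σ ^ 2))⁻¹ * Real.exp (-ξ ^ 2 / (2 * σ ^ 2))) := by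
        funext ξ; rw [hJ, hf]
      rw [heq]
      apply Continuous.aestronglyMeasurable
      fun_prop
    refine hg.mono' hmeas (Filter.Eventually.of_forall fun ξ => ?_)
    rw [Real.norm_eq_abs, hJ, hf]
    set X : ℝ := Real.exp (Δbar * |ξ| / σ ^ 2) with hX
    set q : ℝ := Real.exp (-ξ ^ 2 / (2 * σ ^ 2)) with hq
    have hX1 : (1:ℝ) ≤ X := Real.one_le_exp (by positivity)
    have hCpos : (0:ℝ) < C := by rw [hC]; positivity
    have hq0 : (0:ℝ) < q := by rw [hq]; exact Real.exp_pos _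
    rw [abs_of_nonneg (by positivity : (0:ℝ) ≤ 1 / Δbar ^ 2 * (E + X - 2) ^ 2 * (C * q))]
    have hEX : (E + X - 2) ^ 2 ≤ E ^ 2 * X ^ 2 := by
      have h2 : E + X - 2 ≤ E * X := by nlinarith
      nlinarith
    have hXsq : X ^ 2 = Real.exp (2 * (Δbar * |ξ| / σ ^ 2)) := by
      rw [hX, sq, ← Real.exp_add]; ring_nf
    have hX2 : X ^ 2 * q ≤ Real.exp (2 * c * ξ - ξ ^ 2 / (2 * σ ^ 2))
        + Real.exp (-(2 * c) * ξ - ξ ^ 2 / (2 * σ ^ 2)) := by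
      rcases abs_cases ξ with ⟨h, _⟩ | ⟨h, _⟩
      · have heq : X ^ 2 * q = Real.exp (2 * c * ξ - ξ ^ 2 / (2 * σ ^ 2)) := by
          rw [hXsq, hq, ← Real.exp_add]
          congr 1
          rw [h, hc]; ring
        rw [heq]
        have := (Real.exp_pos (-(2 * c) * ξ - ξ ^ 2 / (2 * σ ^ 2))).le
        linarith
      · have heq : X ^ 2 * q = Real.exp (-(2 * c) * ξ - ξ ^ 2 / (2 * σ ^ 2)) := by
          rw [hXsq, hq, ← Real.exp_add]
          congr 1
          rw [h, hc]; field_simp; ring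
        rw [heq]
        have := (Real.exp_pos (2 * c * ξ - ξ ^ 2 / (2 * σ ^ 2))).le
        linarith
    have step1 : 1 / Δbar ^ 2 * (E + X - 2) ^ 2 * (C * q)
        ≤ 1 / Δbar ^ 2 * (E ^ 2 * X ^ 2) * (C * q) := by
      apply mul_le_mul_of_nonneg_right _ (by positivity)
      exact mul_le_mul_of_nonneg_left hEX (by positivity)
    have step2 : 1 / Δbar ^ 2 * (E ^ 2 * X ^ 2) * (C * q) = K * (X ^ 2 * q) := by
      rw [hK]; field_simp
    have step3 : K * (X ^ 2 * q) ≤ K * (Real.exp (2 * c * ξ - ξ ^ 2 / (2 * σ ^ 2))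
        + Real.exp (-(2 * c) * ξ - ξ ^ 2 / (2 * σ ^ 2))) := by
      apply mul_le_mul_of_nonneg_left hX2
      rw [hK]; positivity
    linarith
end

section
/- Let f : ℝ → (0, ∞) be a probability density that is continuously differentiable with bounded derivative and strictly log-concave, and let h : ℝ → (0, ∞) be a strictly positive probability density. Fix reals s and t, and define for θ̄ ∈ ℝ: F(θ̄) = (∫_{s − t}^{∞} f(s − θ̄ − u) h(u) du) / (∫_ℝ f(s − θ̄ − u) h(u) du). Then F is continuously differentiable on ℝ and F'(θ̄) < 0 for every θ̄ ∈ ℝ. -/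
/-!
Write `x = s - θ̄` and let `w(u) = f(x - u) h(u)` be the unnormalised posterior of the noise `u`.
Differentiating in `x` multiplies `w` by `φ(u) = (log f)'(x - u)`, which strict log-concavity
makes strictly increasing in `u`. The derivative of the posterior tail `P(u > s - t)` is then
the posterior covariance of `φ(u)` and `1[u > s - t]`, which is positive because a strictly
increasing function has a larger mean on an upper tail than overall. Bounded `f'` provides the
domination needed to differentiate under the integral sign; it also bounds `f`, since a
Lipschitz integrable density cannot have tall peaks.
-/

open MeasureTheory Set

theorem setIntegral_pos_of_pos {α : Type*} [MeasurableSpace α] {μ : Measure α} {f : α → ℝ}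
    {s : Set α} (hs : MeasurableSet s) (hμs : μ s ≠ 0) (hf : ∀ x ∈ s, 0 < f x)
    (hfi : IntegrableOn f s μ) : 0 < ∫ x in s, f x ∂μ := by
  rw [setIntegral_pos_iff_support_of_nonneg_ae ((ae_restrict_iff' hs).2 (ae_of_all _ fun x hx =>
    (hf x hx).le)) hfi]
  exact (pos_iff_ne_zero.2 hμs).trans_le (measure_mono fun x hx => ⟨(hf x hx).ne', hx⟩)

theorem LipschitzWith.sq_le_mul_integral {f : ℝ → ℝ} {K : NNReal} (hf : LipschitzWith K f)
    (hK : 0 < K) (hf0 : ∀ x, 0 ≤ f x) (hfi : Integrable f) (x : ℝ) :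
    f x ^ 2 ≤ 4 * K * ∫ y, f y := by
  set δ := f x / (2 * K)
  have hδ : 0 ≤ δ := by have := hf0 x; positivity
  have hlow : ∀ y ∈ Icc x (x + δ), f x / 2 ≤ f y := by
    intro y hy
    have hdist := hf.dist_le_mul y x
    rw [Real.dist_eq, Real.dist_eq, abs_of_nonneg (by linarith [hy.1] : 0 ≤ y - x)] at hdist
    have hKδ : (K : ℝ) * (y - x) ≤ f x / 2 := by
      calc (K : ℝ) * (y - x) ≤ K * δ := by gcongr; linarith [hy.2]
        _ = f x / 2 := by simp only [δ]; field_simp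
    linarith [neg_abs_le (f y - f x)]
  calc f x ^ 2 = 4 * K * (f x / 2 * δ) := by simp only [δ]; field_simp; ring
    _ ≤ 4 * K * ∫ y in Icc x (x + δ), f y := by
      gcongr
      simpa [Real.volume_real_Icc_of_le (by linarith : x ≤ x + δ)] using
        setIntegral_ge_of_const_le_real measurableSet_Icc (by simp) hlow hfi.integrableOn
    _ ≤ 4 * K * ∫ y, f y :=
      mul_le_mul_of_nonneg_left (setIntegral_le_integral hfi (ae_of_all _ hf0)) (by positivity)

theorem setIntegral_Ioi_mul_integral_lt {μ : Measure ℝ} {w φ : ℝ → ℝ} {a : ℝ}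
    (hφ : StrictMono φ) (hw : ∀ u, 0 < w u) (hwi : Integrable w μ)
    (hφwi : Integrable (fun u => φ u * w u) μ) (hIoi : μ (Ioi a) ≠ 0)
    (hIic : μ (Iic a) ≠ 0) :
    (∫ u in Ioi a, w u ∂μ) * ∫ u, φ u * w u ∂μ <
      (∫ u, w u ∂μ) * ∫ u in Ioi a, φ u * w u ∂μ := by
  have hA : 0 < ∫ u in Ioi a, w u ∂μ :=
    setIntegral_pos_of_pos measurableSet_Ioi hIoi (fun u _ => hw u) hwi.integrableOn
  have hB : 0 < ∫ u in Iic a, w u ∂μ :=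
    setIntegral_pos_of_pos measurableSet_Iic hIic (fun u _ => hw u) hwi.integrableOn
  have hP : φ a * ∫ u in Ioi a, w u ∂μ < ∫ u in Ioi a, φ u * w u ∂μ := by
    rw [← integral_const_mul, ← sub_pos,
      ← integral_sub hφwi.integrableOn (hwi.integrableOn.const_mul _)]
    refine setIntegral_pos_of_pos measurableSet_Ioi hIoi (fun u hu => ?_)
      (hφwi.integrableOn.sub (hwi.integrableOn.const_mul _))
    nlinarith [hφ (mem_Ioi.1 hu), hw u]
  have hQ : ∫ u in Iic a, φ u * w u ∂μ ≤ φ a * ∫ u in Iic a, w u ∂μ := by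
    rw [← integral_const_mul]
    exact setIntegral_mono_on hφwi.integrableOn (hwi.integrableOn.const_mul _) measurableSet_Iic
      fun u hu => mul_le_mul_of_nonneg_right (hφ.monotone hu) (hw u).le
  -- after splitting the integrals over `ℝ` at `a`, the claim is `hB * hP + hA * hQ`
  rw [← integral_add_compl measurableSet_Ioi hwi, ← integral_add_compl measurableSet_Ioi hφwi,
    compl_Ioi]
  nlinarith

section IntegralCompSubMul

variable {μ : Measure ℝ} {g h : ℝ → ℝ} {C M : ℝ}

theorem integrable_comp_sub_mul (hg : Continuous g) (hgC : ∀ x, |g x| ≤ C)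
    (hh : Integrable h μ) (x : ℝ) : Integrable (fun u => g (x - u) * h u) μ :=
  hh.bdd_mul (hg.comp (continuous_sub_left x)).aestronglyMeasurable (ae_of_all _ fun _ => hgC _)

theorem continuous_integral_comp_sub_mul (hg : Continuous g) (hgC : ∀ x, |g x| ≤ C)
    (hh : Integrable h μ) : Continuous fun x => ∫ u, g (x - u) * h u ∂μ :=
  continuous_of_dominated (fun x => (integrable_comp_sub_mul hg hgC hh x).aestronglyMeasurable)
    (fun _ => ae_of_all _ fun _ => by
      rw [norm_mul, Real.norm_eq_abs]
      exact mul_le_mul_of_nonneg_right (hgC _) (norm_nonneg _))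
    (hh.norm.const_mul C)
    (ae_of_all _ fun u => (hg.comp (continuous_sub_right u)).mul continuous_const)

theorem hasDerivAt_integral_comp_sub_mul (hg : ContDiff ℝ 1 g) (hgC : ∀ x, |g x| ≤ C)
    (hg'M : ∀ x, |deriv g x| ≤ M) (hh : Integrable h μ) (x : ℝ) :
    HasDerivAt (fun x => ∫ u, g (x - u) * h u ∂μ) (∫ u, deriv g (x - u) * h u ∂μ) x := by
  have hg' : Continuous (deriv g) := hg.continuous_deriv le_rfl
  refine (hasDerivAt_integral_of_dominated_loc_of_deriv_le
    (F' := fun y u => deriv g (y - u) * h u) (bound := fun u => M * ‖h u‖) Filter.univ_mem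
    (Filter.Eventually.of_forall fun y => (integrable_comp_sub_mul hg.continuous hgC hh y).1)
    (integrable_comp_sub_mul hg.continuous hgC hh x)
    (integrable_comp_sub_mul hg' hg'M hh x).1
    (ae_of_all _ fun _ _ _ => ?_) (hh.norm.const_mul M) (ae_of_all _ fun u y _ => ?_)).2
  · rw [norm_mul, Real.norm_eq_abs]
    exact mul_le_mul_of_nonneg_right (hg'M _) (norm_nonneg _)
  · simpa using (((hg.differentiable one_ne_zero) (y - u)).hasDerivAt.comp y
      ((hasDerivAt_id y).sub_const u)).mul_const (h u)

theorem contDiff_integral_comp_sub_mul (hg : ContDiff ℝ 1 g) (hgC : ∀ x, |g x| ≤ C)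
    (hg'M : ∀ x, |deriv g x| ≤ M) (hh : Integrable h μ) :
    ContDiff ℝ 1 fun x => ∫ u, g (x - u) * h u ∂μ := by
  have hderiv := hasDerivAt_integral_comp_sub_mul hg hgC hg'M hh
  rw [contDiff_one_iff_deriv, funext fun x => (hderiv x).deriv]
  exact ⟨fun x => (hderiv x).differentiableAt,
    continuous_integral_comp_sub_mul (hg.continuous_deriv le_rfl) hg'M hh⟩

theorem integral_comp_sub_mul_pos [NeZero μ] (hg : Continuous g) (hg0 : ∀ x, 0 < g x)
    (hgC : ∀ x, |g x| ≤ C) (hh0 : ∀ u, 0 < h u) (hh : Integrable h μ) (x : ℝ) :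
    0 < ∫ u, g (x - u) * h u ∂μ := by
  simpa using setIntegral_pos_of_pos MeasurableSet.univ (by simpa using NeZero.ne μ)
    (fun u _ => mul_pos (hg0 (x - u)) (hh0 u)) (integrable_comp_sub_mul hg hgC hh x).integrableOn

end IntegralCompSubMul

theorem strictAnti_logDeriv_of_strictConcaveOn_log {f : ℝ → ℝ} (hf : Differentiable ℝ f)
    (hf0 : ∀ x, 0 < f x) (hlog : StrictConcaveOn ℝ univ fun x => Real.log (f x)) :
    StrictAnti (logDeriv f) := by
  have hderiv : ∀ x, HasDerivAt (fun y => Real.log (f y)) (logDeriv f x) x := fun x => by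
    simpa [logDeriv_apply, div_eq_mul_inv, mul_comm] using
      (hf x).hasDerivAt.log (hf0 x).ne'
  intro x y hxy
  simpa only [(hderiv x).deriv, (hderiv y).deriv] using
    hlog.strictAntiOn_deriv (fun x _ => (hderiv x).differentiableAt) (mem_univ x) (mem_univ y) hxy

/-- The posterior probability that the noise `u`, with prior density `h`, exceeds `a` given the
observation `x = u + θ` with `θ` of density `f`. In the theorem `x = s - θ̄` and `a = s - t`. -/
noncomputable def posteriorTail (f h : ℝ → ℝ) (a x : ℝ) : ℝ :=
  (∫ u in Ioi a, f (x - u) * h u) / ∫ u, f (x - u) * h u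

section PosteriorTail

variable {f h : ℝ → ℝ} {C M : ℝ}

theorem contDiff_posteriorTail (hf : ContDiff ℝ 1 f) (hf0 : ∀ x, 0 < f x)
    (hfC : ∀ x, |f x| ≤ C) (hf'M : ∀ x, |deriv f x| ≤ M) (hh0 : ∀ u, 0 < h u)
    (hh : Integrable h) (a : ℝ) : ContDiff ℝ 1 (posteriorTail f h a) :=
  (contDiff_integral_comp_sub_mul hf hfC hf'M hh.restrict).div
    (contDiff_integral_comp_sub_mul hf hfC hf'M hh)
    fun x => (integral_comp_sub_mul_pos hf.continuous hf0 hfC hh0 hh x).ne'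

theorem deriv_posteriorTail_pos (hf : ContDiff ℝ 1 f) (hf0 : ∀ x, 0 < f x)
    (hfC : ∀ x, |f x| ≤ C) (hf'M : ∀ x, |deriv f x| ≤ M)
    (hlog : StrictAnti (logDeriv f)) (hh0 : ∀ u, 0 < h u) (hh : Integrable h) (a x : ℝ) :
    0 < deriv (posteriorTail f h a) x := by
  have hD := integral_comp_sub_mul_pos hf.continuous hf0 hfC hh0 hh x
  have hderiv : HasDerivAt (posteriorTail f h a) _ x :=
    (hasDerivAt_integral_comp_sub_mul hf hfC hf'M hh.restrict x).div
      (hasDerivAt_integral_comp_sub_mul hf hfC hf'M hh x) hD.ne'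
  rw [hderiv.deriv]
  refine div_pos (sub_pos.2 ?_) (pow_pos hD 2)
  have hφw : (fun u => logDeriv f (x - u) * (f (x - u) * h u)) = fun u => deriv f (x - u) * h u :=
    funext fun u => by rw [logDeriv_apply]; field_simp [(hf0 (x - u)).ne']
  have hmean := setIntegral_Ioi_mul_integral_lt (μ := volume) (a := a)
    (φ := fun u => logDeriv f (x - u)) (w := fun u => f (x - u) * h u)
    (fun _ _ huv => hlog (sub_lt_sub_left huv x))
    (fun u => mul_pos (hf0 (x - u)) (hh0 u)) (integrable_comp_sub_mul hf.continuous hfC hh x)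
    (by rw [hφw]; exact integrable_comp_sub_mul (hf.continuous_deriv le_rfl) hf'M hh x)
    (by simp) (by simp)
  rw [hφw] at hmean
  linarith

end PosteriorTail

/-- Paper's lemma (SFOSD of the posterior type distribution given the common component):
with `f` a strictly positive, `C¹`, boundedly differentiable, strictly log-concave density
and `h` a strictly positive density, the Bayes-rule posterior probability
`F(θ̄) = (∫_{s−t}^∞ f(s−θ̄−u) h(u) du) / (∫_ℝ f(s−θ̄−u) h(u) du)`
is continuously differentiable and strictly decreasing in `θ̄`. -/
theorem posterior_cdf_decreasing_in_common_component
    (f h : ℝ → ℝ)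
    (hf_pos : ∀ x, 0 < f x) (hf_dens : ∫ x, f x = 1)
    (hf_smooth : ContDiff ℝ 1 f)
    (hf_bdd : ∃ M, ∀ x, |deriv f x| ≤ M)
    (hf_logconc : StrictConcaveOn ℝ Set.univ fun x => Real.log (f x))
    (hh_pos : ∀ x, 0 < h x) (hh_dens : ∫ x, h x = 1)
    (s t : ℝ) (F : ℝ → ℝ)
    (hF : ∀ θbar, F θbar =
      (∫ u in Set.Ioi (s - t), f (s - θbar - u) * h u) / ∫ u, f (s - θbar - u) * h u) :
    ContDiff ℝ 1 F ∧ ∀ θbar, deriv F θbar < 0 := by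
  obtain ⟨M, hM⟩ := hf_bdd
  have hf_int : Integrable f := .of_integral_ne_zero (by simp [hf_dens])
  have hh_int : Integrable h := .of_integral_ne_zero (by simp [hh_dens])
  have hf_lip : LipschitzWith (M.toNNReal + 1) f :=
    lipschitzWith_of_nnnorm_deriv_le (hf_smooth.differentiable one_ne_zero) fun x => by
      rw [← NNReal.coe_le_coe, coe_nnnorm, Real.norm_eq_abs]
      push_cast
      linarith [hM x, Real.le_coe_toNNReal M]
  have hf_le (x : ℝ) : |f x| ≤ √(4 * ↑(M.toNNReal + 1) * ∫ y, f y) :=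
    Real.abs_le_sqrt (hf_lip.sq_le_mul_integral (by positivity) (fun y => (hf_pos y).le) hf_int x)
  have hlog := strictAnti_logDeriv_of_strictConcaveOn_log (hf_smooth.differentiable one_ne_zero)
    hf_pos hf_logconc
  have hFG : F = fun θ => posteriorTail f h (s - t) (s - θ) := funext hF
  have hG := contDiff_posteriorTail hf_smooth hf_pos hf_le hM hh_pos hh_int (s - t)
  subst hFG
  refine ⟨hG.comp (contDiff_const.sub contDiff_id), fun θ => ?_⟩
  rw [deriv_comp_const_sub]
  linarith [deriv_posteriorTail_pos hf_smooth hf_pos hf_le hM hlog hh_pos hh_int (s - t) (s - θ)]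
end

section
/- In the quality linkage model with N agents and action profile a, for every agent i and every fixed s_{−i}, the posterior CDF (s_i, z) ↦ P(θ̄ ≤ z | S = s) is a C¹ function of (s_i, z) and satisfies ∂/∂s_i P(θ̄ ≤ z | S = s) < 0 for all (s_i, z). In the circumstance linkage model, the analogous statement holds with the common shock in place of the common type: (s_i, z) ↦ P(ε̄ ≤ z | S = s) is C¹ and ∂/∂s_i P(ε̄ ≤ z | S = s) < 0 for all (s_i, z). -/
open MeasureTheory Real Filter

/-- Convolution of two densities on ℝ. -/
noncomputable def conv (f g : ℝ → ℝ) (x : ℝ) : ℝ := ∫ t, f t * g (x - t)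

/-- A probability density on ℝ that is strictly positive, `C¹` with bounded derivative,
and strictly log-concave. -/
def NiceDensity (f : ℝ → ℝ) : Prop :=
  (∀ x, 0 < f x) ∧ (∫ x, f x = 1) ∧ ContDiff ℝ 1 f ∧
    (∃ M, ∀ x, |deriv f x| ≤ M) ∧
    StrictConcaveOn ℝ Set.univ (fun x => Real.log (f x))

/-- Quality linkage model: joint weight of `(θ̄, θ⊥ᵢ)` together with the likelihood of the
outcome profile `s` at action profile `a` (outcomes `Sⱼ = θ̄ + θ⊥ⱼ + aⱼ + εⱼ`). -/
noncomputable def qWeight (fb fp fe : ℝ → ℝ) {N : ℕ} (a : Fin N → ℝ) (i : Fin N)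
    (s : Fin N → ℝ) (b t : ℝ) : ℝ :=
  fb b * fp t * fe (s i - a i - b - t) *
    ∏ j ∈ Finset.univ.erase i, conv fp fe (s j - a j - b)

/-- Quality linkage model: Bayes-rule posterior mean `E[θᵢ | S = s]` of agent `i`'s type
`θᵢ = θ̄ + θ⊥ᵢ`, conjectured action profile `a`. -/
noncomputable def qPostMean (fb fp fe : ℝ → ℝ) {N : ℕ} (a : Fin N → ℝ) (i : Fin N)
    (s : Fin N → ℝ) : ℝ :=
  (∫ b, ∫ t, (b + t) * qWeight fb fp fe a i s b t) /
    (∫ b, ∫ t, qWeight fb fp fe a i s b t)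

/-- Circumstance linkage model: joint weight of `(ε̄, θᵢ)` together with the likelihood of
the outcome profile `s` at action profile `a` (outcomes `Sⱼ = θⱼ + aⱼ + ε̄ + ε⊥ⱼ`). -/
noncomputable def cWeight (ft fb fp : ℝ → ℝ) {N : ℕ} (a : Fin N → ℝ) (i : Fin N)
    (s : Fin N → ℝ) (e t : ℝ) : ℝ :=
  fb e * ft t * fp (s i - a i - t - e) *
    ∏ j ∈ Finset.univ.erase i, conv ft fp (s j - a j - e)

/-- Circumstance linkage model: Bayes-rule posterior mean `E[θᵢ | S = s]`. -/
noncomputable def cPostMean (ft fb fp : ℝ → ℝ) {N : ℕ} (a : Fin N → ℝ) (i : Fin N)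
    (s : Fin N → ℝ) : ℝ :=
  (∫ e, ∫ t, t * cWeight ft fb fp a i s e t) /
    (∫ e, ∫ t, cWeight ft fb fp a i s e t)

/-- Quality linkage model: density of the outcome profile `S` at action profile `a`. -/
noncomputable def qDensity (fb fp fe : ℝ → ℝ) {N : ℕ} (a : Fin N → ℝ)
    (s : Fin N → ℝ) : ℝ :=
  ∫ b, fb b * ∏ j, conv fp fe (s j - a j - b)

/-- Circumstance linkage model: density of the outcome profile `S` at action profile `a`. -/
noncomputable def cDensity (ft fb fp : ℝ → ℝ) {N : ℕ} (a : Fin N → ℝ)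
    (s : Fin N → ℝ) : ℝ :=
  ∫ e, fb e * ∏ j, conv ft fp (s j - a j - e)

/-- Quality linkage model: agent `i1`'s expected value of the principal's posterior-mean
forecast of his type when the principal conjectures actions `α` and agent `i1` actually
deviates by `Δ`. -/
noncomputable def qVal (fb fp fe : ℝ → ℝ) {N : ℕ} (i1 : Fin N) (α : Fin N → ℝ)
    (Δ : ℝ) : ℝ :=
  ∫ s : Fin N → ℝ,
    qPostMean fb fp fe α i1 (Function.update s i1 (s i1 + Δ)) * qDensity fb fp fe α s

/-- Circumstance linkage model: agent `i1`'s expected value of the principal's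
posterior-mean forecast of his type when the principal conjectures actions `α` and agent
`i1` actually deviates by `Δ`. -/
noncomputable def cVal (ft fb fp : ℝ → ℝ) {N : ℕ} (i1 : Fin N) (α : Fin N → ℝ)
    (Δ : ℝ) : ℝ :=
  ∫ s : Fin N → ℝ,
    cPostMean ft fb fp α i1 (Function.update s i1 (s i1 + Δ)) * cDensity ft fb fp α s

/-- Marginal value of effort in the quality linkage model with population size `N + 1`
(agent 1 is coordinate `0`; the value of distortion does not depend on the conjectured
action profile, so the zero profile is used). -/
noncomputable def MVQ (fb fp fe : ℝ → ℝ) (N : ℕ) : ℝ :=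
  deriv (fun Δ => qVal fb fp fe (0 : Fin (N + 1)) (fun _ => 0) Δ) 0

/-- Marginal value of effort in the circumstance linkage model with population size
`N + 1`. -/
noncomputable def MVC (ft fb fp : ℝ → ℝ) (N : ℕ) : ℝ :=
  deriv (fun Δ => cVal ft fb fp (0 : Fin (N + 1)) (fun _ => 0) Δ) 0

/-- Upper Dini derivative `D⁺f(x) = limsup_{h ↓ 0} (f (x + h) − f x) / h`. -/
noncomputable def diniUpper (f : ℝ → ℝ) (x : ℝ) : ℝ :=
  Filter.limsup (fun h => (f (x + h) - f x) / h) (nhdsWithin 0 (Set.Ioi 0))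

/-- Quality linkage model: Bayes-rule posterior CDF `P(θ̄ ≤ z | S = s)` of the common type
component. -/
noncomputable def qBarCDF (fb fp fe : ℝ → ℝ) {N : ℕ} (a : Fin N → ℝ)
    (s : Fin N → ℝ) (z : ℝ) : ℝ :=
  (∫ b in Set.Iic z, fb b * ∏ j, conv fp fe (s j - a j - b)) /
    (∫ b, fb b * ∏ j, conv fp fe (s j - a j - b))

/-- Circumstance linkage model: Bayes-rule posterior CDF `P(ε̄ ≤ z | S = s)` of the common
noise component. -/
noncomputable def cBarCDF (ft fb fp : ℝ → ℝ) {N : ℕ} (a : Fin N → ℝ)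
    (s : Fin N → ℝ) (z : ℝ) : ℝ :=
  (∫ e in Set.Iic z, fb e * ∏ j, conv ft fp (s j - a j - e)) /
    (∫ e, fb e * ∏ j, conv ft fp (s j - a j - e))

/-!
Given `S = s`, the common component `b` (`θ̄`, resp. `ε̄`) has posterior density proportional to
`G b * H (sᵢ - aᵢ - b)`, where `H` is the density of the idiosyncratic part of `Sᵢ - aᵢ` (a
convolution of two nice densities) and `G` collects the prior of `b` and the likelihoods of the
other agents. So `P(b ≤ z | S = s)` is the posterior CDF of a location model with observation
`y = sᵢ - aᵢ`. Strict log-concavity survives convolution (Prékopa; here by a symmetrisation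
argument), so `H' / H` is strictly decreasing: `H` has the strict monotone likelihood ratio
property. The numerator of `∂_y P(b ≤ z | y)` is then
`∬_{t ≤ z < r} G t G r (H' (y - t) H (y - r) - H (y - t) H' (y - r)) < 0`.
Smoothness in `(y, z)` comes from differentiating under the integral sign (`H` and `H'` are
bounded) and from the continuity of both partial derivatives.
-/

open Topology

lemma le_integral_add_of_abs_deriv_le {f : ℝ → ℝ} {M : ℝ} (hd : Differentiable ℝ f)
    (hf' : ∀ x, |deriv f x| ≤ M) (hf0 : ∀ x, 0 ≤ f x) (hfi : Integrable f) (x : ℝ) :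
    f x ≤ (∫ y, f y) + M := by
  have hM : 0 ≤ M := (abs_nonneg _).trans (hf' 0)
  have hle : ∀ y ∈ Set.Icc (x - 1) x, f x ≤ f y + M := by
    intro y hy
    have := image_sub_le_mul_sub_of_deriv_le hd (fun z => (le_abs_self _).trans (hf' z)) hy.2
    nlinarith [hy.1]
  calc f x = ∫ _ in (x - 1)..x, f x := by simp
    _ ≤ ∫ y in (x - 1)..x, (f y + M) :=
        intervalIntegral.integral_mono_on (by linarith) intervalIntegrable_const
          (hfi.intervalIntegrable.add intervalIntegrable_const) hle
    _ = (∫ y in (x - 1)..x, f y) + M := by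
        simp [intervalIntegral.integral_add hfi.intervalIntegrable intervalIntegrable_const]
    _ ≤ (∫ y, f y) + M := by
        rw [intervalIntegral.integral_of_le (by linarith)]
        exact add_le_add_left (setIntegral_le_integral hfi (Eventually.of_forall hf0)) M

lemma StrictConcaveOn.add_lt_add_of_shift {φ : ℝ → ℝ} (hφ : StrictConcaveOn ℝ Set.univ φ)
    {r t δ : ℝ} (hrt : r < t) (hδ : 0 < δ) : φ t + φ (r - δ) < φ (t - δ) + φ r := by
  -- `t - δ` and `r` are the two convex combinations of `r - δ` and `t` with weights `w`, `1 - w`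
  set w := δ / (t - r + δ)
  have hL : 0 < t - r + δ := by linarith
  have hw_pos : 0 < w := div_pos hδ hL
  have hw_one_sub : 0 < 1 - w := by rw [sub_pos, div_lt_one hL]; linarith
  have hw_mul : w * (t - r + δ) = δ := div_mul_cancel₀ _ hL.ne'
  have hne : r - δ ≠ t := by linarith
  have h₁ := hφ.2 (Set.mem_univ _) (Set.mem_univ _) hne hw_pos hw_one_sub (by ring)
  have h₂ := hφ.2 (Set.mem_univ _) (Set.mem_univ _) hne hw_one_sub hw_pos (by ring)
  simp only [smul_eq_mul] at h₁ h₂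
  rw [show w * (r - δ) + (1 - w) * t = t - δ by linear_combination -hw_mul] at h₁
  rw [show (1 - w) * (r - δ) + w * t = r by linear_combination hw_mul] at h₂
  linarith

lemma strictConcaveOn_log_iff_strictAnti {f : ℝ → ℝ} (hd : Differentiable ℝ f)
    (hpos : ∀ x, 0 < f x) :
    StrictConcaveOn ℝ Set.univ (fun x => log (f x)) ↔ StrictAnti (fun x => deriv f x / f x) := by
  have hlog : ∀ x, HasDerivAt (fun x => log (f x)) (deriv f x / f x) x :=
    fun x => (hd x).hasDerivAt.log (hpos x).ne'
  have hderiv : deriv (fun x => log (f x)) = fun x => deriv f x / f x :=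
    funext fun x => (hlog x).deriv
  constructor
  · intro h x y hxy
    rw [← hderiv]
    exact h.strictAntiOn_deriv (fun x _ => (hlog x).differentiableAt) trivial trivial hxy
  · intro h
    exact StrictAnti.strictConcaveOn_univ_of_deriv
      (continuous_iff_continuousAt.2 fun x => (hlog x).continuousAt) (hderiv ▸ h)

namespace NiceDensity

variable {f : ℝ → ℝ}

lemma pos (hf : NiceDensity f) (x : ℝ) : 0 < f x := hf.1 x

lemma integral_eq_one (hf : NiceDensity f) : ∫ x, f x = 1 := hf.2.1

lemma contDiff (hf : NiceDensity f) : ContDiff ℝ 1 f := hf.2.2.1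

lemma differentiable (hf : NiceDensity f) : Differentiable ℝ f :=
  hf.contDiff.differentiable one_ne_zero

lemma continuous (hf : NiceDensity f) : Continuous f := hf.contDiff.continuous

lemma exists_abs_deriv_le (hf : NiceDensity f) : ∃ M, ∀ x, |deriv f x| ≤ M := hf.2.2.2.1

lemma strictConcaveOn_log (hf : NiceDensity f) :
    StrictConcaveOn ℝ Set.univ (fun x => log (f x)) :=
  hf.2.2.2.2

lemma integrable (hf : NiceDensity f) : Integrable f :=
  Integrable.of_integral_ne_zero (by rw [hf.integral_eq_one]; exact one_ne_zero)

lemma exists_abs_le (hf : NiceDensity f) : ∃ B, ∀ x, |f x| ≤ B := by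
  obtain ⟨M, hM⟩ := hf.exists_abs_deriv_le
  refine ⟨1 + M, fun x => ?_⟩
  rw [abs_of_pos (hf.pos x), ← hf.integral_eq_one]
  exact le_integral_add_of_abs_deriv_le hf.differentiable hM (fun x => (hf.pos x).le)
    hf.integrable x

lemma strictAnti_deriv_div (hf : NiceDensity f) : StrictAnti (fun x => deriv f x / f x) :=
  (strictConcaveOn_log_iff_strictAnti hf.differentiable hf.pos).1 hf.strictConcaveOn_log

lemma mul_shift_lt (hf : NiceDensity f) {r t δ : ℝ} (hrt : r < t) (hδ : 0 < δ) :
    f t * f (r - δ) < f (t - δ) * f r := by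
  have h := hf.strictConcaveOn_log.add_lt_add_of_shift hrt hδ
  rwa [← log_mul (hf.pos _).ne' (hf.pos _).ne', ← log_mul (hf.pos _).ne' (hf.pos _).ne',
    log_lt_log_iff (mul_pos (hf.pos _) (hf.pos _)) (mul_pos (hf.pos _) (hf.pos _))] at h

end NiceDensity

section ParametricIntegral

variable {μ : Measure ℝ} {w g : ℝ → ℝ} {B M : ℝ}

lemma norm_mul_comp_sub_le (hgB : ∀ x, |g x| ≤ B) (x t : ℝ) :
    ‖w t * g (x - t)‖ ≤ B * ‖w t‖ := by
  rw [norm_mul, mul_comm]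
  exact mul_le_mul_of_nonneg_right (hgB _) (norm_nonneg _)

lemma integrable_mul_comp_sub (hw : Integrable w μ) (hg : Continuous g) (hgB : ∀ x, |g x| ≤ B)
    (x : ℝ) : Integrable (fun t => w t * g (x - t)) μ :=
  hw.mul_bdd (by fun_prop) (Eventually.of_forall fun t => hgB (x - t))

lemma continuous_integral_mul_comp_sub (hw : Integrable w μ) (hg : Continuous g)
    (hgB : ∀ x, |g x| ≤ B) : Continuous (fun x => ∫ t, w t * g (x - t) ∂μ) :=
  continuous_of_dominated (fun x => (integrable_mul_comp_sub hw hg hgB x).aestronglyMeasurable)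
    (fun x => Eventually.of_forall (norm_mul_comp_sub_le hgB x)) (hw.norm.const_mul B)
    (Eventually.of_forall fun t => by fun_prop)

lemma hasDerivAt_integral_mul_comp_sub (hw : Integrable w μ) (hg : ContDiff ℝ 1 g)
    (hgB : ∀ x, |g x| ≤ B) (hg'M : ∀ x, |deriv g x| ≤ M) (x₀ : ℝ) :
    HasDerivAt (fun x => ∫ t, w t * g (x - t) ∂μ) (∫ t, w t * deriv g (x₀ - t) ∂μ) x₀ := by
  have hd : Differentiable ℝ g := hg.differentiable one_ne_zero
  refine (hasDerivAt_integral_of_dominated_loc_of_deriv_le (Filter.univ_mem)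
    (Eventually.of_forall fun x => (integrable_mul_comp_sub hw hg.continuous hgB x).1)
    (integrable_mul_comp_sub hw hg.continuous hgB x₀)
    (integrable_mul_comp_sub hw (hg.continuous_deriv le_rfl) hg'M x₀).1
    (Eventually.of_forall fun t x _ => norm_mul_comp_sub_le (w := w) hg'M x t) (hw.norm.const_mul M)
    (Eventually.of_forall fun t x _ => ?_)).2
  exact ((hd (x - t)).hasDerivAt.comp x ((hasDerivAt_id x).sub_const t)).const_mul (w t)
    |>.congr_deriv (by simp)

lemma contDiff_integral_mul_comp_sub (hw : Integrable w μ) (hg : ContDiff ℝ 1 g)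
    (hgB : ∀ x, |g x| ≤ B) (hg'M : ∀ x, |deriv g x| ≤ M) :
    ContDiff ℝ 1 (fun x => ∫ t, w t * g (x - t) ∂μ) := by
  have hD x := hasDerivAt_integral_mul_comp_sub hw hg hgB hg'M x
  refine contDiff_one_iff_deriv.2 ⟨fun x => (hD x).differentiableAt, ?_⟩
  rw [funext fun x => (hD x).deriv]
  exact continuous_integral_mul_comp_sub hw (hg.continuous_deriv le_rfl) hg'M

lemma abs_integral_mul_comp_sub_le (hw : Integrable w μ) (hgB : ∀ x, |g x| ≤ B) (x : ℝ) :
    |∫ t, w t * g (x - t) ∂μ| ≤ B * ∫ t, ‖w t‖ ∂μ := by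
  rw [← integral_const_mul]
  exact norm_integral_le_of_norm_le (hw.norm.const_mul B)
    (Eventually.of_forall (norm_mul_comp_sub_le hgB x))

lemma integral_mul_comp_sub_pos (hw : Continuous w) (hwi : Integrable w) (hw_pos : ∀ t, 0 < w t)
    (hg : Continuous g) (hgB : ∀ x, |g x| ≤ B) (hg_pos : ∀ x, 0 < g x) (x : ℝ) :
    0 < ∫ t, w t * g (x - t) :=
  integral_pos_of_integrable_nonneg_nonzero (x := 0) (by fun_prop)
    (integrable_mul_comp_sub hwi hg hgB x) (fun t => (mul_pos (hw_pos t) (hg_pos _)).le)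
    (mul_pos (hw_pos 0) (hg_pos _)).ne'

end ParametricIntegral

lemma integral_mul_integral_lt_of_symm {α : Type*} [MeasurableSpace α] {μ : Measure α} [SFinite μ]
    {a b c d : α → ℝ} (ha : Integrable a μ) (hb : Integrable b μ) (hc : Integrable c μ)
    (hd : Integrable d μ) (hle : ∀ t r, a t * d r + a r * d t ≤ b t * c r + b r * c t)
    {U : Set (α × α)} (hU : μ.prod μ U ≠ 0)
    (hlt : ∀ p ∈ U, a p.1 * d p.2 + a p.2 * d p.1 < b p.1 * c p.2 + b p.2 * c p.1) :
    (∫ t, a t ∂μ) * (∫ t, d t ∂μ) < (∫ t, b t ∂μ) * (∫ t, c t ∂μ) := by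
  have hbc : Integrable (fun p : α × α => b p.1 * c p.2 + c p.1 * b p.2) (μ.prod μ) :=
    (hb.mul_prod hc).add (hc.mul_prod hb)
  have had : Integrable (fun p : α × α => a p.1 * d p.2 + d p.1 * a p.2) (μ.prod μ) :=
    (ha.mul_prod hd).add (hd.mul_prod ha)
  set Φ : α × α → ℝ := fun p =>
    (b p.1 * c p.2 + c p.1 * b p.2) - (a p.1 * d p.2 + d p.1 * a p.2)
  have hΦ_nonneg : 0 ≤ Φ := fun p => by
    simp only [Pi.zero_apply, Φ]; linarith [hle p.1 p.2]
  have hΦ : ∫ p, Φ p ∂(μ.prod μ) =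
      2 * ((∫ t, b t ∂μ) * (∫ t, c t ∂μ) - (∫ t, a t ∂μ) * (∫ t, d t ∂μ)) := by
    rw [integral_sub hbc had, integral_add (hb.mul_prod hc) (hc.mul_prod hb),
      integral_add (ha.mul_prod hd) (hd.mul_prod ha), integral_prod_mul, integral_prod_mul,
      integral_prod_mul, integral_prod_mul]
    ring
  have hΦ_pos : 0 < ∫ p, Φ p ∂(μ.prod μ) := by
    rw [integral_pos_iff_support_of_nonneg hΦ_nonneg (hbc.sub had)]
    refine pos_iff_ne_zero.2 fun h => hU (measure_mono_null (fun p hp => ?_) h)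
    simp only [Function.mem_support, Φ]
    linarith [hlt p hp]
  linarith

section Convolution

variable {f g : ℝ → ℝ}

lemma conv_pos (hf : NiceDensity f) (hg : NiceDensity g) (x : ℝ) : 0 < conv f g x := by
  obtain ⟨B, hB⟩ := hg.exists_abs_le
  exact integral_mul_comp_sub_pos hf.continuous hf.integrable hf.pos hg.continuous hB hg.pos x

lemma hasDerivAt_conv (hf : NiceDensity f) (hg : NiceDensity g) (x : ℝ) :
    HasDerivAt (conv f g) (conv f (deriv g) x) x := by
  obtain ⟨B, hB⟩ := hg.exists_abs_le
  obtain ⟨M, hM⟩ := hg.exists_abs_deriv_le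
  exact hasDerivAt_integral_mul_comp_sub hf.integrable hg.contDiff hB hM x

lemma deriv_conv (hf : NiceDensity f) (hg : NiceDensity g) : deriv (conv f g) = conv f (deriv g) :=
  funext fun x => (hasDerivAt_conv hf hg x).deriv

lemma contDiff_conv (hf : NiceDensity f) (hg : NiceDensity g) : ContDiff ℝ 1 (conv f g) := by
  obtain ⟨B, hB⟩ := hg.exists_abs_le
  obtain ⟨M, hM⟩ := hg.exists_abs_deriv_le
  exact contDiff_integral_mul_comp_sub hf.integrable hg.contDiff hB hM

lemma abs_conv_le (hf : NiceDensity f) {B : ℝ} (hg : ∀ x, |g x| ≤ B) (x : ℝ) :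
    |conv f g x| ≤ B := by
  have h := abs_integral_mul_comp_sub_le hf.integrable hg x
  rwa [integral_congr_ae (Eventually.of_forall fun t => norm_of_nonneg (hf.pos t).le),
    hf.integral_eq_one, mul_one] at h

lemma integral_conv (hf : NiceDensity f) (hg : NiceDensity g) : ∫ x, conv f g x = 1 := by
  have h := integral_convolution (L := ContinuousLinearMap.mul ℝ ℝ) (μ := volume) (ν := volume)
    hf.integrable hg.integrable
  simpa [conv, convolution, hf.integral_eq_one, hg.integral_eq_one] using h

lemma conv_sub_eq (f h : ℝ → ℝ) (x δ : ℝ) : conv f h (x - δ) = ∫ r, f (r - δ) * h (x - r) := by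
  rw [conv, ← integral_sub_right_eq_self _ δ]
  simp only [sub_sub_sub_cancel_right]

lemma strictAnti_conv_deriv_div (hf : NiceDensity f) (hg : NiceDensity g) :
    StrictAnti (fun x => conv f (deriv g) x / conv f g x) := by
  intro x₁ x₂ h₁₂
  rw [div_lt_div_iff₀ (conv_pos hf hg x₂) (conv_pos hf hg x₁)]
  set δ := x₂ - x₁
  have hδ : 0 < δ := sub_pos.2 h₁₂
  obtain ⟨B, hB⟩ := hg.exists_abs_le
  obtain ⟨M, hM⟩ := hg.exists_abs_deriv_le
  have hg' : Continuous (deriv g) := hg.contDiff.continuous_deriv le_rfl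
  -- the difference of the two sides is
  -- `(f (t - δ) f r - f t f (r - δ)) (g' (x₂ - t) g (x₂ - r) - g' (x₂ - r) g (x₂ - t))`, a product
  -- of two positive factors by log-concavity of `f` (shift form) and of `g` (derivative form)
  have hkey : ∀ t r, r < t →
      f t * deriv g (x₂ - t) * (f (r - δ) * g (x₂ - r)) +
          f r * deriv g (x₂ - r) * (f (t - δ) * g (x₂ - t)) <
        f (t - δ) * deriv g (x₂ - t) * (f r * g (x₂ - r)) +
          f (r - δ) * deriv g (x₂ - r) * (f t * g (x₂ - t)) := by
    intro t r hrt
    have hf_shift := hf.mul_shift_lt hrt hδ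
    have hg_mlr := hg.strictAnti_deriv_div (show x₂ - t < x₂ - r by linarith)
    rw [div_lt_div_iff₀ (hg.pos _) (hg.pos _)] at hg_mlr
    nlinarith [mul_pos (sub_pos.2 hf_shift) (sub_pos.2 hg_mlr)]
  rw [show x₁ = x₂ - δ by ring, conv_sub_eq, conv_sub_eq]
  refine integral_mul_integral_lt_of_symm
    (integrable_mul_comp_sub hf.integrable hg' hM x₂)
    (integrable_mul_comp_sub (hf.integrable.comp_sub_right δ) hg' hM x₂)
    (integrable_mul_comp_sub hf.integrable hg.continuous hB x₂)
    (integrable_mul_comp_sub (hf.integrable.comp_sub_right δ) hg.continuous hB x₂)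
    (fun t r => ?_) (U := {p | p.2 < p.1}) ?_ (fun p hp => hkey p.1 p.2 hp)
  · rcases lt_trichotomy t r with h | rfl | h
    · linarith [hkey r t h]
    · exact le_of_eq (by ring)
    · exact (hkey t r h).le
  · rw [← Measure.volume_eq_prod]
    exact (isOpen_lt continuous_snd continuous_fst).measure_ne_zero volume ⟨(1, 0), by norm_num⟩

theorem niceDensity_conv (hf : NiceDensity f) (hg : NiceDensity g) : NiceDensity (conv f g) := by
  obtain ⟨M, hM⟩ := hg.exists_abs_deriv_le
  have hcd := contDiff_conv hf hg
  refine ⟨conv_pos hf hg, integral_conv hf hg, hcd, ⟨M, fun x => ?_⟩, ?_⟩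
  · rw [deriv_conv hf hg]
    exact abs_conv_le hf hM x
  · rw [strictConcaveOn_log_iff_strictAnti (hcd.differentiable one_ne_zero) (conv_pos hf hg),
      deriv_conv hf hg]
    exact strictAnti_conv_deriv_div hf hg

end Convolution

lemma isLittleO_sub_partial_of_continuousAt {f A : ℝ × ℝ → ℝ} {x₀ z₀ : ℝ}
    (hA : ContinuousAt A (x₀, z₀)) (hfx : ∀ q, HasDerivAt (fun x => f (x, q.2)) (A q) q.1) :
    (fun h : ℝ × ℝ => f (x₀ + h.1, z₀ + h.2) - f (x₀, z₀ + h.2) - A (x₀, z₀) * h.1)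
      =o[𝓝 0] fun h => h := by
  refine Asymptotics.isLittleO_iff.2 fun ε hε => ?_
  obtain ⟨δ, hδ, hAδ⟩ := Metric.continuousAt_iff.1 hA ε hε
  filter_upwards [Metric.ball_mem_nhds 0 hδ] with h hh
  rw [mem_ball_zero_iff] at hh
  have hmvt := Convex.norm_image_sub_le_of_norm_hasDerivWithin_le
    (f := fun x => f (x, z₀ + h.2) - A (x₀, z₀) * x)
    (f' := fun x => A (x, z₀ + h.2) - A (x₀, z₀)) (C := ε) (s := Set.uIcc x₀ (x₀ + h.1))
    (fun x _ => ((hfx (x, z₀ + h.2)).sub ((hasDerivAt_id x).const_mul _)).hasDerivWithinAt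
      |>.congr_deriv (by simp))
    (fun x hx => ?_) (convex_uIcc _ _) Set.left_mem_uIcc Set.right_mem_uIcc
  · calc ‖f (x₀ + h.1, z₀ + h.2) - f (x₀, z₀ + h.2) - A (x₀, z₀) * h.1‖
        = ‖(f (x₀ + h.1, z₀ + h.2) - A (x₀, z₀) * (x₀ + h.1)) -
            (f (x₀, z₀ + h.2) - A (x₀, z₀) * x₀)‖ := by ring_nf
      _ ≤ ε * ‖x₀ + h.1 - x₀‖ := hmvt
      _ ≤ ε * ‖h‖ := by
          gcongr
          simpa using norm_fst_le h
  · have hx' : |x - x₀| ≤ |h.1| := by simpa using Set.abs_sub_left_of_mem_uIcc hx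
    refine (hAδ ?_).le
    rw [Prod.dist_eq, Real.dist_eq, Real.dist_eq, add_sub_cancel_left]
    exact max_lt (hx'.trans_lt ((norm_fst_le h).trans_lt hh)) ((norm_snd_le h).trans_lt hh)

lemma hasFDerivAt_of_continuousAt_partial {f A : ℝ × ℝ → ℝ} {B : ℝ} {p : ℝ × ℝ}
    (hA : ContinuousAt A p) (hfx : ∀ q, HasDerivAt (fun x => f (x, q.2)) (A q) q.1)
    (hfz : HasDerivAt (fun z => f (p.1, z)) B p.2) :
    HasFDerivAt f (A p • ContinuousLinearMap.fst ℝ ℝ ℝ + B • ContinuousLinearMap.snd ℝ ℝ ℝ) p := by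
  obtain ⟨x₀, z₀⟩ := p
  rw [hasFDerivAt_iff_isLittleO_nhds_zero]
  have hz : (fun h : ℝ × ℝ => f (x₀, z₀ + h.2) - f (x₀, z₀) - B * h.2) =o[𝓝 0] fun h => h := by
    have := ((hasDerivAt_iff_isLittleO_nhds_zero.1 hfz).comp_tendsto
      (continuous_snd.tendsto' (0 : ℝ × ℝ) 0 rfl)).trans_isBigO
        (Asymptotics.isBigO_snd_prod' (f' := fun h : ℝ × ℝ => h) (l := 𝓝 0))
    exact this.congr_left fun h => by simp [mul_comm]
  refine ((isLittleO_sub_partial_of_continuousAt hA hfx).add hz).congr_left fun h => ?_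
  rw [show (x₀, z₀) + h = (x₀ + h.1, z₀ + h.2) from rfl]
  simp only [add_apply, smul_apply,
    ContinuousLinearMap.coe_fst', ContinuousLinearMap.coe_snd', smul_eq_mul]
  ring

lemma contDiff_one_of_continuous_partials {f A B : ℝ × ℝ → ℝ} (hA : Continuous A)
    (hB : Continuous B) (hfx : ∀ q, HasDerivAt (fun x => f (x, q.2)) (A q) q.1)
    (hfz : ∀ q, HasDerivAt (fun z => f (q.1, z)) (B q) q.2) : ContDiff ℝ 1 f := by
  have hf p := hasFDerivAt_of_continuousAt_partial hA.continuousAt hfx (hfz p)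
  refine contDiff_one_iff_fderiv.2 ⟨fun p => (hf p).differentiableAt, ?_⟩
  rw [funext fun p => (hf p).fderiv]
  fun_prop

section LocationPosterior

variable {φ G H : ℝ → ℝ}

lemma setIntegral_Iic_eq_add_intervalIntegral (hφ : Integrable φ) (z : ℝ) :
    ∫ b in Set.Iic z, φ b = (∫ b in Set.Iic 0, φ b) + ∫ b in (0 : ℝ)..z, φ b := by
  rw [← intervalIntegral.integral_Iic_sub_Iic hφ.integrableOn hφ.integrableOn]
  ring

lemma hasDerivAt_setIntegral_Iic (hφ : Continuous φ) (hφi : Integrable φ) (z : ℝ) :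
    HasDerivAt (fun z => ∫ b in Set.Iic z, φ b) (φ z) z := by
  rw [funext (setIntegral_Iic_eq_add_intervalIntegral hφi)]
  exact (intervalIntegral.integral_hasDerivAt_right hφi.intervalIntegrable
    (hφ.stronglyMeasurableAtFilter _ _) hφ.continuousAt).const_add _

lemma continuous_setIntegral_Iic_mul_comp_sub {g : ℝ → ℝ} {B : ℝ} (hG : Continuous G)
    (hGi : Integrable G) (hg : Continuous g) (hgB : ∀ x, |g x| ≤ B) :
    Continuous (fun p : ℝ × ℝ => ∫ b in Set.Iic p.2, G b * g (p.1 - b)) := by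
  have hsplit : Continuous fun p : ℝ × ℝ =>
      (∫ b in Set.Iic 0, G b * g (p.1 - b)) + ∫ b in (0 : ℝ)..p.2, G b * g (p.1 - b) :=
    ((continuous_integral_mul_comp_sub (hGi.restrict (s := Set.Iic 0)) hg hgB).comp
      continuous_fst).add
      (intervalIntegral.continuous_parametric_intervalIntegral_of_continuous
        (f := fun (p : ℝ × ℝ) b => G b * g (p.1 - b)) (by fun_prop) continuous_snd)
  exact hsplit.congr fun p =>
    (setIntegral_Iic_eq_add_intervalIntegral (integrable_mul_comp_sub hGi hg hgB _) _).symm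

/-- The posterior CDF at `z` of a location parameter `b` with prior density proportional to `G`,
given the observation `y = b + ε` where `ε` has density `H`. -/
noncomputable def posteriorCDF (G H : ℝ → ℝ) (y z : ℝ) : ℝ :=
  (∫ b in Set.Iic z, G b * H (y - b)) / ∫ b, G b * H (y - b)

lemma contDiff_posteriorCDF (hG : Continuous G) (hG_pos : ∀ b, 0 < G b) (hGi : Integrable G)
    (hH : NiceDensity H) : ContDiff ℝ 1 (fun p : ℝ × ℝ => posteriorCDF G H p.1 p.2) := by
  obtain ⟨B, hB⟩ := hH.exists_abs_le
  obtain ⟨M, hM⟩ := hH.exists_abs_deriv_le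
  have hHc := hH.continuous
  have hnum : ContDiff ℝ 1 (fun p : ℝ × ℝ => ∫ b in Set.Iic p.2, G b * H (p.1 - b)) :=
    contDiff_one_of_continuous_partials
      (continuous_setIntegral_Iic_mul_comp_sub hG hGi (hH.contDiff.continuous_deriv le_rfl) hM)
      (by fun_prop : Continuous fun p : ℝ × ℝ => G p.2 * H (p.1 - p.2))
      (fun q => hasDerivAt_integral_mul_comp_sub (μ := volume.restrict (Set.Iic q.2))
        hGi.restrict hH.contDiff hB hM q.1)
      (fun q => hasDerivAt_setIntegral_Iic (by fun_prop)
        (integrable_mul_comp_sub hGi hHc hB q.1) q.2)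
  have hden : ContDiff ℝ 1 (fun p : ℝ × ℝ => ∫ b, G b * H (p.1 - b)) :=
    (contDiff_integral_mul_comp_sub hGi hH.contDiff hB hM).comp contDiff_fst
  exact hnum.div hden fun p => (integral_mul_comp_sub_pos hG hGi hG_pos hHc hB hH.pos p.1).ne'

lemma setIntegral_Iic_mul_integral_lt (hG_pos : ∀ b, 0 < G b) (hGi : Integrable G)
    (hH : NiceDensity H) (y z : ℝ) :
    (∫ b in Set.Iic z, G b * deriv H (y - b)) * ∫ b, G b * H (y - b) <
      (∫ b in Set.Iic z, G b * H (y - b)) * ∫ b, G b * deriv H (y - b) := by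
  obtain ⟨B, hB⟩ := hH.exists_abs_le
  obtain ⟨M, hM⟩ := hH.exists_abs_deriv_le
  have hH' : Continuous (deriv H) := hH.contDiff.continuous_deriv le_rfl
  have hkey : ∀ t r, t ≤ z → z < r →
      G t * deriv H (y - t) * (G r * H (y - r)) < G t * H (y - t) * (G r * deriv H (y - r)) := by
    intro t r ht hr
    have hmlr := hH.strictAnti_deriv_div (show y - r < y - t by linarith)
    rw [div_lt_div_iff₀ (hH.pos _) (hH.pos _)] at hmlr
    nlinarith [mul_pos (hG_pos t) (hG_pos r)]
  -- pairs `t, r` on the same side of `z` contribute equally to both sides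
  have h := integral_mul_integral_lt_of_symm
    ((integrable_mul_comp_sub hGi hH' hM y).indicator (s := Set.Iic z) measurableSet_Iic)
    ((integrable_mul_comp_sub hGi hH.continuous hB y).indicator (s := Set.Iic z) measurableSet_Iic)
    (integrable_mul_comp_sub hGi hH' hM y) (integrable_mul_comp_sub hGi hH.continuous hB y)
    (fun t r => ?_) (U := {p | p.1 < z ∧ z < p.2}) ?_ (fun p hp => ?_)
  · simpa only [integral_indicator measurableSet_Iic] using h
  · by_cases ht : t ≤ z <;> by_cases hr : r ≤ z <;>
      simp only [Set.indicator_apply, Set.mem_Iic, ht, hr, if_true, if_false, zero_mul, add_zero,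
        zero_add, le_refl]
    · exact le_of_eq (by ring)
    · exact (hkey t r ht (not_le.1 hr)).le
    · exact (hkey r t hr (not_le.1 ht)).le
  · rw [← Measure.volume_eq_prod]
    exact ((isOpen_lt continuous_fst continuous_const).inter
      (isOpen_lt continuous_const continuous_snd)).measure_ne_zero volume
      ⟨(z - 1, z + 1), by constructor <;> simp⟩
  · simpa [Set.indicator_apply, hp.1.le, not_le.2 hp.2] using hkey p.1 p.2 hp.1.le hp.2

lemma deriv_posteriorCDF_neg (hG : Continuous G) (hG_pos : ∀ b, 0 < G b) (hGi : Integrable G)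
    (hH : NiceDensity H) (y z : ℝ) : deriv (fun y => posteriorCDF G H y z) y < 0 := by
  obtain ⟨B, hB⟩ := hH.exists_abs_le
  obtain ⟨M, hM⟩ := hH.exists_abs_deriv_le
  have hD := integral_mul_comp_sub_pos hG hGi hG_pos hH.continuous hB hH.pos y
  unfold posteriorCDF
  rw [((hasDerivAt_integral_mul_comp_sub (μ := volume.restrict (Set.Iic z)) hGi.restrict
    hH.contDiff hB hM y).fun_div (hasDerivAt_integral_mul_comp_sub hGi hH.contDiff hB hM y)
      hD.ne').deriv]
  exact div_neg_of_neg_of_pos (sub_neg.2 (setIntegral_Iic_mul_integral_lt hG_pos hGi hH y z))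
    (pow_pos hD 2)

end LocationPosterior

lemma integrable_mul_prod_comp_sub {ι : Type*} (t : Finset ι) {f H : ℝ → ℝ} (hf : NiceDensity f)
    (hH : NiceDensity H) (c : ι → ℝ) : Integrable (fun b => f b * ∏ j ∈ t, H (c j - b)) := by
  obtain ⟨B, hB⟩ := hH.exists_abs_le
  have hHc := hH.continuous
  refine hf.integrable.mul_bdd (c := B ^ t.card) (by fun_prop) (Eventually.of_forall fun b => ?_)
  rw [norm_prod, ← Finset.prod_const]
  exact Finset.prod_le_prod (fun _ _ => norm_nonneg _) fun j _ => hB _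

lemma qBarCDF_update_eq (fb fp fe : ℝ → ℝ) {N : ℕ} (a : Fin N → ℝ) (i : Fin N)
    (s : Fin N → ℝ) (x z : ℝ) :
    qBarCDF fb fp fe a (Function.update s i x) z =
      posteriorCDF (fun b => fb b * ∏ j ∈ Finset.univ.erase i, conv fp fe (s j - a j - b))
        (conv fp fe) (x - a i) z := by
  have h : ∀ b, fb b * ∏ j, conv fp fe (Function.update s i x j - a j - b) =
      fb b * (∏ j ∈ Finset.univ.erase i, conv fp fe (s j - a j - b)) *
        conv fp fe (x - a i - b) := by
    intro b
    rw [← Finset.mul_prod_erase _ _ (Finset.mem_univ i), Function.update_self,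
      Finset.prod_congr rfl fun j hj => by rw [Function.update_of_ne (Finset.ne_of_mem_erase hj)]]
    ring
  simp only [qBarCDF, posteriorCDF, h]

theorem qBarCDF_smooth_fosd {fb fp fe : ℝ → ℝ} (hb : NiceDensity fb) (hp : NiceDensity fp)
    (he : NiceDensity fe) {N : ℕ} (a : Fin N → ℝ) (i : Fin N) (s : Fin N → ℝ) :
    ContDiff ℝ 1 (fun p : ℝ × ℝ => qBarCDF fb fp fe a (Function.update s i p.1) p.2) ∧
      ∀ z, deriv (fun x => qBarCDF fb fp fe a (Function.update s i x) z) (s i) < 0 := by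
  have hH := niceDensity_conv hp he
  set G := fun b => fb b * ∏ j ∈ Finset.univ.erase i, conv fp fe (s j - a j - b)
  have hG : Continuous G := by
    have := hb.continuous
    have := hH.continuous
    fun_prop
  have hG_pos : ∀ b, 0 < G b := fun b => mul_pos (hb.pos b) (Finset.prod_pos fun j _ => hH.pos _)
  have hGi : Integrable G := integrable_mul_prod_comp_sub _ hb hH _
  simp only [qBarCDF_update_eq]
  refine ⟨(contDiff_posteriorCDF hG hG_pos hGi hH).comp
    ((contDiff_fst.sub contDiff_const).prodMk contDiff_snd), fun z => ?_⟩
  rw [deriv_comp_sub_const (f := fun y => posteriorCDF G (conv fp fe) y z)]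
  exact deriv_posteriorCDF_neg hG hG_pos hGi hH _ z

theorem common_component_smooth_fosd_general {N : ℕ}
    (fθb fθp fε fθ fεb fεp : ℝ → ℝ)
    (hθb : NiceDensity fθb) (hθp : NiceDensity fθp) (hε : NiceDensity fε)
    (hθ : NiceDensity fθ) (hεb : NiceDensity fεb) (hεp : NiceDensity fεp)
    (a : Fin N → ℝ) :
    (∀ (i : Fin N) (s : Fin N → ℝ),
      ContDiff ℝ 1 (fun p : ℝ × ℝ => qBarCDF fθb fθp fε a (Function.update s i p.1) p.2) ∧
        ∀ z : ℝ,
          deriv (fun x => qBarCDF fθb fθp fε a (Function.update s i x) z) (s i) < 0) ∧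
    (∀ (i : Fin N) (s : Fin N → ℝ),
      ContDiff ℝ 1 (fun p : ℝ × ℝ => cBarCDF fθ fεb fεp a (Function.update s i p.1) p.2) ∧
        ∀ z : ℝ,
          deriv (fun x => cBarCDF fθ fεb fεp a (Function.update s i x) z) (s i) < 0) :=
  -- `cBarCDF ft fb fp` is `qBarCDF fb ft fp` by definition
  ⟨fun i s => qBarCDF_smooth_fosd hθb hθp hε a i s,
    fun i s => qBarCDF_smooth_fosd hεb hθ hεp a i s⟩

/-- Paper's lemma: a higher own outcome shifts the posterior distribution of the common
component upward in the smooth first-order stochastic dominance sense: for every agent `i`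
and fixed `s₋ᵢ`, the posterior CDF of the common component is a `C¹` function of
`(sᵢ, z)`, strictly decreasing in `sᵢ`; in the quality linkage model the common component
is `θ̄`, in the circumstance linkage model it is `ε̄`. -/
theorem common_component_smooth_fosd {N : ℕ} (hN : 0 < N)
    (fθb fθp fε fθ fεb fεp : ℝ → ℝ)
    (hθb : NiceDensity fθb) (hθp : NiceDensity fθp) (hε : NiceDensity fε)
    (hθ : NiceDensity fθ) (hεb : NiceDensity fεb) (hεp : NiceDensity fεp)
    (a : Fin N → ℝ) :
    (∀ (i : Fin N) (s : Fin N → ℝ),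
      ContDiff ℝ 1 (fun p : ℝ × ℝ => qBarCDF fθb fθp fε a (Function.update s i p.1) p.2) ∧
        ∀ z : ℝ,
          deriv (fun x => qBarCDF fθb fθp fε a (Function.update s i x) z) (s i) < 0) ∧
    (∀ (i : Fin N) (s : Fin N → ℝ),
      ContDiff ℝ 1 (fun p : ℝ × ℝ => cBarCDF fθ fεb fεp a (Function.update s i p.1) p.2) ∧
        ∀ z : ℝ,
          deriv (fun x => cBarCDF fθ fεb fεp a (Function.update s i x) z) (s i) < 0) :=
  common_component_smooth_fosd_general fθb fθp fε fθ fεb fεp hθb hθp hε hθ hεb hεp a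
end

section
/- Let MV : {1, 2, 3, …} → (0, 1) be strictly increasing, let c ∈ ℝ satisfy MV(1) < c, and suppose MV(N₀) > c for some N₀. For p ∈ [0, 1] and N ≥ 2 define Φ(p, N) = Σ_{k=0}^{N−1} (N−1 choose k) p^k (1 − p)^{N−1−k} MV(1 + k), i.e. Φ(p, N) = E[MV(1 + B)] with B ~ Binomial(N − 1, p). Then: (i) for every N with MV(N) > c there exists a unique p(N) ∈ (0, 1) with Φ(p(N), N) = c; (ii) p(N) is strictly decreasing in N on the set of such N; and (iii) p(N) → 0 as N → ∞. -/
/-!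
With `f k = MV (1 + k)`, `Φ p N` is the mean of `f B` for `B ~ Binomial(N - 1, p)`.
Conditioning on one trial gives `E_{n+1} f = (1 - p) E_n f + p E_n f(· + 1)`, and induction on
this recurrence shows that the mean is strictly increasing in `p` (as `f` is) and, for `p > 0`,
strictly increasing in `n`. Its values at `p = 0` and `p = 1` are `MV 1 < c` and `MV N > c`, so the
intermediate value theorem gives (i). A solution `p' ≥ p(N)` at `N' > N` would give
`c = Φ(p', N') ≥ Φ(p(N), N') > Φ(p(N), N) = c`, whence (ii). For (iii), the probability that a
`Binomial(n, ε)` variable stays below `N₀` tends to `0`, so `Φ(ε, N) > c` for large `N`,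
which forces `p(N) < ε`.
-/

open Finset Filter Topology

noncomputable section

def binomialWeight (n k : ℕ) (p : ℝ) : ℝ := n.choose k * p ^ k * (1 - p) ^ (n - k)

/-- The expectation `E[f B]` for `B ~ Binomial(n, p)`. -/
def binomialMean (n : ℕ) (f : ℕ → ℝ) (p : ℝ) : ℝ :=
  ∑ k ∈ range (n + 1), binomialWeight n k p * f k

end

section BinomialWeight

variable {n k : ℕ} {p : ℝ}

lemma binomialWeight_nonneg (hp0 : 0 ≤ p) (hp1 : p ≤ 1) : 0 ≤ binomialWeight n k p := by
  have : 0 ≤ 1 - p := by linarith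
  unfold binomialWeight
  positivity

lemma sum_binomialWeight (n : ℕ) (p : ℝ) : ∑ k ∈ range (n + 1), binomialWeight n k p = 1 := by
  calc ∑ k ∈ range (n + 1), binomialWeight n k p
      = ∑ k ∈ range (n + 1), p ^ k * (1 - p) ^ (n - k) * n.choose k :=
        sum_congr rfl fun k _ ↦ by rw [binomialWeight]; ring
    _ = 1 := by rw [← add_pow, add_sub_cancel, one_pow]

lemma binomialWeight_succ_zero (n : ℕ) (p : ℝ) :
    binomialWeight (n + 1) 0 p = (1 - p) * binomialWeight n 0 p := by
  simp [binomialWeight, pow_succ, mul_comm]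

lemma binomialWeight_succ_succ (n k : ℕ) (p : ℝ) :
    binomialWeight (n + 1) (k + 1) p =
      p * binomialWeight n k p + (1 - p) * binomialWeight n (k + 1) p := by
  rcases lt_or_ge k n with hkn | hnk
  · obtain ⟨j, rfl⟩ := Nat.exists_eq_add_of_lt hkn
    simp only [binomialWeight, Nat.choose_succ_succ', Nat.cast_add,
      show k + j + 1 + 1 - (k + 1) = j + 1 by omega, show k + j + 1 - k = j + 1 by omega,
      show k + j + 1 - (k + 1) = j by omega]
    ring
  · simp only [binomialWeight, Nat.choose_succ_succ',
      Nat.choose_eq_zero_of_lt (by omega : n < k + 1), Nat.cast_add, Nat.cast_zero,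
      show n + 1 - (k + 1) = n - k by omega]
    ring

lemma tendsto_binomialWeight_atTop (k : ℕ) (hp0 : 0 < p) (hp1 : p < 1) :
    Tendsto (fun n ↦ binomialWeight n k p) atTop (𝓝 0) := by
  have hq : 0 < 1 - p := by linarith
  have hlim :
      Tendsto (fun n : ℕ ↦ (p / (1 - p)) ^ k * ((n : ℝ) ^ k * (1 - p) ^ n)) atTop (𝓝 0) := by
    simpa using (tendsto_pow_const_mul_const_pow_of_abs_lt_one k
      (by rw [abs_of_pos hq]; linarith)).const_mul ((p / (1 - p)) ^ k)
  refine squeeze_zero' (Eventually.of_forall fun n ↦ binomialWeight_nonneg hp0.le hp1.le) ?_ hlim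
  filter_upwards [eventually_ge_atTop k] with n hkn
  have hsplit : (1 - p) ^ n = (1 - p) ^ (n - k) * (1 - p) ^ k := by
    rw [← pow_add, Nat.sub_add_cancel hkn]
  have hchoose : (n.choose k : ℝ) ≤ (n : ℝ) ^ k := by exact_mod_cast Nat.choose_le_pow n k
  calc binomialWeight n k p = (n.choose k : ℝ) * (p ^ k * (1 - p) ^ (n - k)) := by
        rw [binomialWeight, mul_assoc]
    _ ≤ (n : ℝ) ^ k * (p ^ k * (1 - p) ^ (n - k)) := by gcongr
    _ = (p / (1 - p)) ^ k * ((n : ℝ) ^ k * (1 - p) ^ n) := by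
        rw [hsplit, div_pow]; field_simp

end BinomialWeight

section BinomialMean

variable {n : ℕ} {f g : ℕ → ℝ} {p q : ℝ}

lemma binomialMean_zero_left (f : ℕ → ℝ) (p : ℝ) : binomialMean 0 f p = f 0 := by
  simp [binomialMean, binomialWeight]

/-- Condition on the first of the `n + 1` Bernoulli trials. -/
lemma binomialMean_succ (n : ℕ) (f : ℕ → ℝ) (p : ℝ) :
    binomialMean (n + 1) f p =
      (1 - p) * binomialMean n f p + p * binomialMean n (fun k ↦ f (k + 1)) p := by
  have hlast : binomialWeight n (n + 1) p = 0 := by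
    simp [binomialWeight, Nat.choose_succ_self]
  have hshift : ∑ k ∈ range (n + 1), binomialWeight n (k + 1) p * f (k + 1) =
      ∑ k ∈ range n, binomialWeight n (k + 1) p * f (k + 1) := by
    rw [sum_range_succ, hlast, zero_mul, add_zero]
  calc binomialMean (n + 1) f p
      = ∑ k ∈ range (n + 1), binomialWeight (n + 1) (k + 1) p * f (k + 1) +
          binomialWeight (n + 1) 0 p * f 0 := sum_range_succ' _ _
    _ = p * ∑ k ∈ range (n + 1), binomialWeight n k p * f (k + 1) +
          (1 - p) * (∑ k ∈ range n, binomialWeight n (k + 1) p * f (k + 1) +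
            binomialWeight n 0 p * f 0) := by
        simp only [binomialWeight_succ_succ, binomialWeight_succ_zero, add_mul, mul_assoc,
          sum_add_distrib, ← mul_sum, hshift]
        ring
    _ = _ := by
        rw [binomialMean, binomialMean, sum_range_succ' (fun k ↦ binomialWeight n k p * f k) n]
        ring

lemma binomialMean_at_zero (n : ℕ) (f : ℕ → ℝ) : binomialMean n f 0 = f 0 := by
  induction n generalizing f with
  | zero => exact binomialMean_zero_left f 0
  | succ n ih => rw [binomialMean_succ, ih]; ring

lemma binomialMean_at_one (n : ℕ) (f : ℕ → ℝ) : binomialMean n f 1 = f n := by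
  induction n generalizing f with
  | zero => exact binomialMean_zero_left f 1
  | succ n ih => simp only [binomialMean_succ, ih]; ring

lemma continuous_binomialMean (n : ℕ) (f : ℕ → ℝ) : Continuous (binomialMean n f) := by
  unfold binomialMean binomialWeight
  fun_prop

lemma binomialMean_le_binomialMean (hp0 : 0 ≤ p) (hp1 : p ≤ 1) (hfg : ∀ k, f k ≤ g k) :
    binomialMean n f p ≤ binomialMean n g p :=
  sum_le_sum fun k _ ↦ mul_le_mul_of_nonneg_left (hfg k) (binomialWeight_nonneg hp0 hp1)

lemma binomialMean_lt_binomialMean (hp0 : 0 ≤ p) (hp1 : p ≤ 1) (hfg : ∀ k, f k < g k) :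
    binomialMean n f p < binomialMean n g p := by
  obtain ⟨k, hk, hwk⟩ : ∃ k ∈ range (n + 1), (0 : ℝ) < binomialWeight n k p :=
    exists_lt_of_sum_lt (by simp [sum_binomialWeight])
  exact sum_lt_sum (fun i _ ↦ mul_le_mul_of_nonneg_left (hfg i).le (binomialWeight_nonneg hp0 hp1))
    ⟨k, hk, mul_lt_mul_of_pos_left (hfg k) hwk⟩

lemma binomialMean_lt_binomialMean_succ (hf : StrictMono f) (hp0 : 0 < p) (hp1 : p ≤ 1) :
    binomialMean n f p < binomialMean (n + 1) f p := by
  have := binomialMean_lt_binomialMean (n := n) (g := fun k ↦ f (k + 1)) hp0.le hp1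
    fun k ↦ hf k.lt_succ_self
  rw [binomialMean_succ]
  nlinarith

lemma strictMono_binomialMean_left (hf : StrictMono f) (hp0 : 0 < p) (hp1 : p ≤ 1) :
    StrictMono fun n ↦ binomialMean n f p :=
  strictMono_nat_of_lt_succ fun _ ↦ binomialMean_lt_binomialMean_succ hf hp0 hp1

lemma monotoneOn_binomialMean (hf : Monotone f) (n : ℕ) :
    MonotoneOn (binomialMean n f) (Set.Icc 0 1) := by
  induction n generalizing f with
  | zero => intro p _ q _ _; simp only [binomialMean_zero_left, le_refl]
  | succ n ih =>
    intro p hp q hq hpq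
    have hA := ih hf hp hq hpq
    have hB := ih (f := fun k ↦ f (k + 1)) (fun _ _ h ↦ hf (by omega)) hp hq hpq
    have hAB := binomialMean_le_binomialMean (n := n) (g := fun k ↦ f (k + 1)) hq.1 hq.2
      fun k ↦ hf k.le_succ
    rw [binomialMean_succ, binomialMean_succ]
    nlinarith [mul_nonneg (sub_nonneg.2 hp.2) (sub_nonneg.2 hA), mul_nonneg hp.1 (sub_nonneg.2 hB),
      mul_nonneg (sub_nonneg.2 hpq) (sub_nonneg.2 hAB)]

lemma strictMonoOn_binomialMean (hf : StrictMono f) (n : ℕ) :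
    StrictMonoOn (binomialMean (n + 1) f) (Set.Icc 0 1) := by
  intro p hp q hq hpq
  have hA := monotoneOn_binomialMean hf.monotone n hp hq hpq.le
  have hB := monotoneOn_binomialMean (f := fun k ↦ f (k + 1))
    (fun _ _ h ↦ hf.monotone (by omega)) n hp hq hpq.le
  have hAB := binomialMean_lt_binomialMean (n := n) (g := fun k ↦ f (k + 1)) hq.1 hq.2
    fun k ↦ hf k.lt_succ_self
  rw [binomialMean_succ, binomialMean_succ]
  nlinarith [mul_nonneg (sub_nonneg.2 hp.2) (sub_nonneg.2 hA), mul_nonneg hp.1 (sub_nonneg.2 hB),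
    mul_pos (sub_pos.2 hpq) (sub_pos.2 hAB)]

lemma le_binomialMean_of_monotone (hf : Monotone f) (hp0 : 0 ≤ p) (hp1 : p ≤ 1) {m : ℕ}
    (hmn : m ≤ n + 1) :
    f m - (f m - f 0) * ∑ k ∈ range m, binomialWeight n k p ≤ binomialMean n f p := by
  have htotal :
      ∑ k ∈ range m, binomialWeight n k p + ∑ k ∈ Ico m (n + 1), binomialWeight n k p = 1 := by
    rw [sum_range_add_sum_Ico _ hmn, sum_binomialWeight]
  have hlow :
      ∑ k ∈ range m, binomialWeight n k p * f 0 ≤ ∑ k ∈ range m, binomialWeight n k p * f k :=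
    sum_le_sum fun k _ ↦ mul_le_mul_of_nonneg_left (hf k.zero_le) (binomialWeight_nonneg hp0 hp1)
  have hhigh : ∑ k ∈ Ico m (n + 1), binomialWeight n k p * f m ≤
      ∑ k ∈ Ico m (n + 1), binomialWeight n k p * f k :=
    sum_le_sum fun k hk ↦
      mul_le_mul_of_nonneg_left (hf (mem_Ico.1 hk).1) (binomialWeight_nonneg hp0 hp1)
  rw [← sum_mul] at hlow hhigh
  rw [binomialMean, ← sum_range_add_sum_Ico _ hmn]
  linear_combination (-f m) * htotal + hlow + hhigh

lemma eventually_lt_binomialMean (hf : Monotone f) {m : ℕ} {c : ℝ} (hc : c < f m) (hp0 : 0 < p)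
    (hp1 : p < 1) : ∀ᶠ n in atTop, c < binomialMean n f p := by
  have hsmall : Tendsto (fun n ↦ ∑ k ∈ range m, binomialWeight n k p) atTop (𝓝 0) := by
    simpa using tendsto_finsetSum _ fun k _ ↦ tendsto_binomialWeight_atTop k hp0 hp1
  have hlim : Tendsto (fun n ↦ f m - (f m - f 0) * ∑ k ∈ range m, binomialWeight n k p) atTop
      (𝓝 (f m)) := by
    simpa using (hsmall.const_mul (f m - f 0)).const_sub (f m)
  filter_upwards [hlim.eventually_const_lt hc, eventually_ge_atTop m] with n hn hmn
  exact hn.trans_le (le_binomialMean_of_monotone hf hp0.le hp1.le (by omega))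

theorem existsUnique_binomialMean_eq (hf : StrictMono f) (n : ℕ) {c : ℝ} (h0 : f 0 < c)
    (h1 : c < f (n + 1)) : ∃! p, p ∈ Set.Ioo 0 1 ∧ binomialMean (n + 1) f p = c := by
  have hc : c ∈ Set.Ioo (binomialMean (n + 1) f 0) (binomialMean (n + 1) f 1) := by
    rw [binomialMean_at_zero, binomialMean_at_one]
    exact ⟨h0, h1⟩
  obtain ⟨p, hp, hpc⟩ :=
    intermediate_value_Ioo zero_le_one (continuous_binomialMean (n + 1) f).continuousOn hc
  exact ⟨p, ⟨hp, hpc⟩, fun q ⟨hq, hqc⟩ ↦ (strictMonoOn_binomialMean hf n).injOn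
    (Set.Ioo_subset_Icc_self hq) (Set.Ioo_subset_Icc_self hp) (hqc.trans hpc.symm)⟩

theorem lt_of_binomialMean_eq_binomialMean (hf : StrictMono f) {m : ℕ} (hmn : m < n)
    (hp : p ∈ Set.Ioo 0 1) (hq : q ≤ 1) (h : binomialMean n f q = binomialMean m f p) : q < p := by
  by_contra! hpq
  have hmono :=
    monotoneOn_binomialMean hf.monotone n ⟨hp.1.le, hp.2.le⟩ ⟨hp.1.le.trans hpq, hq⟩ hpq
  have hstrict := strictMono_binomialMean_left hf hp.1 hp.2.le hmn
  linarith

theorem eventually_forall_binomialMean_eq_imp_lt (hf : Monotone f) {m : ℕ} {c ε : ℝ}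
    (hc : c < f m) (hε : 0 < ε) :
    ∀ᶠ n in atTop, ∀ p < 1, binomialMean n f p = c → p < ε := by
  rcases lt_or_ge ε 1 with hε1 | hε1
  · filter_upwards [eventually_lt_binomialMean hf hc hε hε1] with n hn p hp1 hpc
    by_contra! hεp
    have := monotoneOn_binomialMean hf n ⟨hε.le, hε1.le⟩ ⟨hε.le.trans hεp, hp1.le⟩ hεp
    linarith
  · exact Eventually.of_forall fun n p hp1 _ ↦ hp1.trans_le hε1

end BinomialMean

theorem mixed_entry_equilibrium_general
    (MV : ℕ → ℝ)
    (hmono : ∀ m n : ℕ, 1 ≤ m → m < n → MV m < MV n)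
    (c : ℝ) (hc1 : MV 1 < c)
    (N₀ : ℕ) (hN₀ : 1 ≤ N₀) (hcN₀ : c < MV N₀)
    (Φ : ℝ → ℕ → ℝ)
    (hΦ : ∀ (p : ℝ) (N : ℕ), Φ p N =
      ∑ k ∈ Finset.range N,
        ((N - 1).choose k : ℝ) * p ^ k * (1 - p) ^ (N - 1 - k) * MV (1 + k)) :
    -- (i) existence and uniqueness
    (∀ N : ℕ, 2 ≤ N → c < MV N →
      ∃! p : ℝ, p ∈ Set.Ioo (0 : ℝ) 1 ∧ Φ p N = c) ∧
    -- (ii) strict monotonicity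
    (∀ (N N' : ℕ) (p p' : ℝ), 2 ≤ N → N < N' → c < MV N → c < MV N' →
      p ∈ Set.Ioo (0 : ℝ) 1 → Φ p N = c →
      p' ∈ Set.Ioo (0 : ℝ) 1 → Φ p' N' = c → p' < p) ∧
    -- (iii) vanishing entry probability
    (∀ ε : ℝ, 0 < ε → ∃ M : ℕ, ∀ N : ℕ, M ≤ N →
      ∀ p : ℝ, p ∈ Set.Ioo (0 : ℝ) 1 → Φ p N = c → p < ε) := by
  set f : ℕ → ℝ := fun k ↦ MV (1 + k)
  have hf : StrictMono f := fun a b hab ↦ hmono _ _ (by omega) (by omega)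
  have hΦf : ∀ p N, Φ p (N + 1) = binomialMean N f p := fun p N ↦ by
    rw [hΦ, Nat.add_sub_cancel]; rfl
  refine ⟨fun N hN hcN ↦ ?_, fun N N' p p' hN hNN' _ _ hp hpc hp' hp'c ↦ ?_, fun ε hε ↦ ?_⟩
  · obtain ⟨n, rfl⟩ : ∃ n, N = n + 2 := ⟨N - 2, by omega⟩
    simp_rw [hΦf]
    have hcf : c < f (n + 1) := by rwa [show f (n + 1) = MV (n + 2) from congrArg MV (by omega)]
    exact existsUnique_binomialMean_eq hf n hc1 hcf
  · obtain ⟨n, rfl⟩ : ∃ n, N = n + 1 := ⟨N - 1, by omega⟩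
    obtain ⟨n', rfl⟩ : ∃ n', N' = n' + 1 := ⟨N' - 1, by omega⟩
    rw [hΦf] at hpc hp'c
    exact lt_of_binomialMean_eq_binomialMean hf (by omega) hp hp'.2.le (hp'c.trans hpc.symm)
  · have hcf : c < f (N₀ - 1) := by rwa [show f (N₀ - 1) = MV N₀ from congrArg MV (by omega)]
    obtain ⟨M, hM⟩ :=
      eventually_atTop.1 (eventually_forall_binomialMean_eq_imp_lt hf.monotone hcf hε)
    refine ⟨M + 1, fun N hN p hp hpc ↦ hM (N - 1) (by omega) p hp.2 ?_⟩
    rwa [← hΦf, Nat.sub_add_cancel (by omega)]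

/-- Algebraic core of the paper's Theorem 2 (circumstance linkage model): `MV` is the
strictly increasing marginal value of effort, valued in `(0, 1)` on `{1, 2, …}`, `c` is
the marginal cost at the entry-indifference action, with `MV 1 < c < MV N₀` for some
`N₀`.  `Φ p N = E[MV (1 + B)]` with `B ~ Binomial (N − 1, p)`.  Then: (i) for every
population size `N ≥ 2` with `MV N > c` there is a unique mixed-equilibrium entry
probability `p(N) ∈ (0, 1)` solving `Φ (p(N)) N = c`; (ii) it is strictly decreasing in
`N`; and (iii) it tends to `0` as `N → ∞`. -/
theorem mixed_entry_equilibrium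
    (MV : ℕ → ℝ)
    (hrange : ∀ n : ℕ, 1 ≤ n → MV n ∈ Set.Ioo (0 : ℝ) 1)
    (hmono : ∀ m n : ℕ, 1 ≤ m → m < n → MV m < MV n)
    (c : ℝ) (hc1 : MV 1 < c)
    (N₀ : ℕ) (hN₀ : 1 ≤ N₀) (hcN₀ : c < MV N₀)
    (Φ : ℝ → ℕ → ℝ)
    (hΦ : ∀ (p : ℝ) (N : ℕ), Φ p N =
      ∑ k ∈ Finset.range N,
        ((N - 1).choose k : ℝ) * p ^ k * (1 - p) ^ (N - 1 - k) * MV (1 + k)) :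
    -- (i) existence and uniqueness
    (∀ N : ℕ, 2 ≤ N → c < MV N →
      ∃! p : ℝ, p ∈ Set.Ioo (0 : ℝ) 1 ∧ Φ p N = c) ∧
    -- (ii) strict monotonicity
    (∀ (N N' : ℕ) (p p' : ℝ), 2 ≤ N → N < N' → c < MV N → c < MV N' →
      p ∈ Set.Ioo (0 : ℝ) 1 → Φ p N = c →
      p' ∈ Set.Ioo (0 : ℝ) 1 → Φ p' N' = c → p' < p) ∧
    -- (iii) vanishing entry probability
    (∀ ε : ℝ, 0 < ε → ∃ M : ℕ, ∀ N : ℕ, M ≤ N →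
      ∀ p : ℝ, p ∈ Set.Ioo (0 : ℝ) 1 → Φ p N = c → p < ε) :=
  mixed_entry_equilibrium_general MV hmono c hc1 N₀ hN₀ hcN₀ Φ hΦ
end
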